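/- arXiv:2603.11885 — 4 statements merged into one kernel-verified Lean document; each statement's English description precedes it below -/
import Mathlib

section
/- Let L₁ and L₂ be two disjoint finite families of pairwise distinct continuous functions ℝ → ℝ whose union has n members in total, such that every two functions in the union have at most one common point, no three of them share a common point, and every function in L₁ has at least one common point with every function in L₂. Then the number of tangent pairs (f, g) with f ∈ L₁ and g ∈ L₂ is at most 2(n − 1). -/
/-- Two bi-infinite `x`-monotone curves (graphs of continuous functions `ℝ → ℝ`) are
tangent (touching) if they have exactly one common point and their difference does not
change sign. -/
def Tangent (f g : ℝ → ℝ) : Prop :=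
  (∃! x, f x = g x) ∧ ((∀ x, f x ≤ g x) ∨ (∀ x, g x ≤ f x))

lemma tangent_comm {f g : ℝ → ℝ} (h : Tangent f g) : Tangent g f := by
  obtain ⟨⟨x, hx, hu⟩, hsign⟩ := h
  exact ⟨⟨x, hx.symm, fun y hy => hu y hy.symm⟩, hsign.symm⟩

open scoped Classical in
/-- The set of lower tangencies: pairs `(f,g) ∈ L₁ × L₂` with `f` tangent to `g`
from below. -/
noncomputable def TFlow (L₁ L₂ : Finset (ℝ → ℝ)) : Finset ((ℝ → ℝ) × (ℝ → ℝ)) :=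
  (L₁ ×ˢ L₂).filter fun pr => Tangent pr.1 pr.2 ∧ ∀ x, pr.1 x ≤ pr.2 x

lemma mem_TFlow {L₁ L₂ : Finset (ℝ → ℝ)} {pr : (ℝ → ℝ) × (ℝ → ℝ)} :
    pr ∈ TFlow L₁ L₂ ↔ pr.1 ∈ L₁ ∧ pr.2 ∈ L₂ ∧ Tangent pr.1 pr.2 ∧ ∀ x, pr.1 x ≤ pr.2 x := by
  simp [TFlow, Finset.mem_filter, Finset.mem_product, and_assoc]

/-- IVT helper: a continuous function changing sign has a zero strictly between. -/
lemma zero_between {w : ℝ → ℝ} (hw : Continuous w) {a b : ℝ}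
    (ha : w a < 0) (hb : 0 < w b) :
    ∃ z, z ∈ Set.uIcc a b ∧ w z = 0 ∧ z ≠ a ∧ z ≠ b := by
  have h0 : (0 : ℝ) ∈ Set.uIcc (w a) (w b) := by
    rw [Set.mem_uIcc]; exact Or.inl ⟨ha.le, hb.le⟩
  obtain ⟨z, hz, hz0⟩ := intermediate_value_uIcc hw.continuousOn h0
  refine ⟨z, hz, hz0, ?_, ?_⟩
  · rintro rfl; exact absurd hz0 (by linarith)
  · rintro rfl; exact absurd hz0 (by linarith)

/-- If `w` has a unique zero `c`, then any point where `w > 0` and any point where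
`w < 0` lie strictly on opposite sides of `c`. -/
lemma unique_zero_between {w : ℝ → ℝ} (hw : Continuous w)
    (hsub : {x : ℝ | w x = 0}.Subsingleton) {c x y : ℝ}
    (hc : w c = 0) (hx : 0 < w x) (hy : w y < 0) :
    (x < c ∧ c < y) ∨ (y < c ∧ c < x) := by
  obtain ⟨z, hzu, hz0, hzy, hzx⟩ := zero_between hw hy hx
  have hzc : z = c := hsub (by exact hz0) (by exact hc)
  subst hzc
  rcases Set.mem_uIcc.mp hzu with ⟨h1, h2⟩ | ⟨h1, h2⟩
  · exact Or.inr ⟨lt_of_le_of_ne h1 (Ne.symm hzy), lt_of_le_of_ne h2 hzx⟩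
  · exact Or.inl ⟨lt_of_le_of_ne h1 (Ne.symm hzx), lt_of_le_of_ne h2 hzy⟩

section FourCycle

variable {L₁ L₂ : Finset (ℝ → ℝ)}

/-- No 4-cycle of lower tangencies. -/
lemma fourcycle
    (hdisj : Disjoint L₁ L₂)
    (hcont : ∀ f : ℝ → ℝ, f ∈ L₁ ∨ f ∈ L₂ → Continuous f)
    (hone : ∀ f g : ℝ → ℝ, (f ∈ L₁ ∨ f ∈ L₂) → (g ∈ L₁ ∨ g ∈ L₂) → f ≠ g →
      {x : ℝ | f x = g x}.Subsingleton)
    (hno3 : ∀ (x : ℝ) (f g h : ℝ → ℝ), (f ∈ L₁ ∨ f ∈ L₂) → (g ∈ L₁ ∨ g ∈ L₂) →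
      (h ∈ L₁ ∨ h ∈ L₂) → f ≠ g → g ≠ h → f ≠ h →
      ¬ (f x = g x ∧ g x = h x))
    {r r' b b' : ℝ → ℝ}
    (hr : r ∈ L₁) (hr' : r' ∈ L₁) (hb : b ∈ L₂) (hb' : b' ∈ L₂)
    (hrr' : r ≠ r') (hbb' : b ≠ b')
    (h1 : (r, b) ∈ TFlow L₁ L₂) (h2 : (r', b) ∈ TFlow L₁ L₂)
    (h3 : (r', b') ∈ TFlow L₁ L₂) (h4 : (r, b') ∈ TFlow L₁ L₂) : False := by
  have mr : r ∈ L₁ ∨ r ∈ L₂ := Or.inl hr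
  have mr' : r' ∈ L₁ ∨ r' ∈ L₂ := Or.inl hr'
  have mb : b ∈ L₁ ∨ b ∈ L₂ := Or.inr hb
  have mb' : b' ∈ L₁ ∨ b' ∈ L₂ := Or.inr hb'
  have nrb : r ≠ b := by rintro rfl; exact Finset.disjoint_left.mp hdisj hr hb
  have nrb' : r ≠ b' := by rintro rfl; exact Finset.disjoint_left.mp hdisj hr hb'
  have nr'b : r' ≠ b := by rintro rfl; exact Finset.disjoint_left.mp hdisj hr' hb
  have nr'b' : r' ≠ b' := by rintro rfl; exact Finset.disjoint_left.mp hdisj hr' hb'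
  obtain ⟨-, -, ⟨⟨a₁, ea₁, ua₁⟩, -⟩, hle₁⟩ := mem_TFlow.mp h1
  obtain ⟨-, -, ⟨⟨b₁, eb₁, ub₁⟩, -⟩, hle₂⟩ := mem_TFlow.mp h2
  obtain ⟨-, -, ⟨⟨a₂, ea₂, ua₂⟩, -⟩, hle₃⟩ := mem_TFlow.mp h3
  obtain ⟨-, -, ⟨⟨b₂, eb₂, ub₂⟩, -⟩, hle₄⟩ := mem_TFlow.mp h4
  -- strict inequalities away from the touching points
  have lt₁ : ∀ x, x ≠ a₁ → r x < b x :=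
    fun x hx => (hle₁ x).lt_of_ne fun e => hx (ua₁ x e)
  have lt₂ : ∀ x, x ≠ b₁ → r' x < b x :=
    fun x hx => (hle₂ x).lt_of_ne fun e => hx (ub₁ x e)
  have lt₃ : ∀ x, x ≠ a₂ → r' x < b' x :=
    fun x hx => (hle₃ x).lt_of_ne fun e => hx (ua₂ x e)
  have lt₄ : ∀ x, x ≠ b₂ → r x < b' x :=
    fun x hx => (hle₄ x).lt_of_ne fun e => hx (ub₂ x e)
  -- the four touching points are pairwise distinct where needed
  have hab : a₁ ≠ b₁ := by
    intro h
    exact hno3 a₁ r b r' mr mb mr' nrb (Ne.symm nr'b) hrr'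
      ⟨ea₁, by rw [← h] at eb₁; exact eb₁.symm⟩
  have hab2 : a₁ ≠ b₂ := by
    intro h
    exact hno3 a₁ b r b' mb mr mb' (Ne.symm nrb) nrb' hbb'
      ⟨ea₁.symm, by rw [← h] at eb₂; exact eb₂⟩
  have ha2b1 : a₂ ≠ b₁ := by
    intro h
    exact hno3 a₂ b' r' b mb' mr' mb (Ne.symm nr'b') nr'b (Ne.symm hbb')
      ⟨ea₂.symm, by rw [← h] at eb₁; exact eb₁⟩
  have ha2b2 : a₂ ≠ b₂ := by
    intro h
    exact hno3 a₂ r b' r' mr mb' mr' nrb' (Ne.symm nr'b') hrr'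
      ⟨by rw [← h] at eb₂; exact eb₂, ea₂.symm⟩
  -- d = r - r' has a unique zero c
  set d : ℝ → ℝ := fun x => r x - r' x with hd_def
  have hd : Continuous d := (hcont r mr).sub (hcont r' mr')
  have hdsub : {x : ℝ | d x = 0}.Subsingleton := by
    have : {x : ℝ | d x = 0} = {x : ℝ | r x = r' x} := by
      ext x; simp [hd_def, sub_eq_zero]
    rw [this]; exact hone r r' mr mr' hrr'
  have hda₁ : 0 < d a₁ := by
    have := lt₂ a₁ (by exact fun h => hab h); simp only [hd_def]; linarith [ea₁]
  have hdb₁ : d b₁ < 0 := by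
    have := lt₁ b₁ (Ne.symm hab); simp only [hd_def]; linarith [eb₁]
  have hdb₂ : 0 < d b₂ := by
    have := lt₃ b₂ (fun h => ha2b2 h.symm); simp only [hd_def]; linarith [eb₂]
  have hda₂ : d a₂ < 0 := by
    have := lt₄ a₂ (fun h => ha2b2 h); simp only [hd_def]; linarith [ea₂]
  obtain ⟨c, -, hc0, -, -⟩ := zero_between hd hdb₁ hda₁
  have s₁ := unique_zero_between hd hdsub hc0 hda₁ hdb₁
  have s₂ := unique_zero_between hd hdsub hc0 hdb₂ hdb₁
  have s₄ := unique_zero_between hd hdsub hc0 hdb₂ hda₂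
  -- e = b - b' has at most one zero, but must vanish on both sides of c
  set e : ℝ → ℝ := fun x => b x - b' x with he_def
  have he : Continuous e := (hcont b mb).sub (hcont b' mb')
  have hesub : {x : ℝ | e x = 0}.Subsingleton := by
    have : {x : ℝ | e x = 0} = {x : ℝ | b x = b' x} := by
      ext x; simp [he_def, sub_eq_zero]
    rw [this]; exact hone b b' mb mb' hbb'
  have hea₁ : e a₁ < 0 := by
    have := lt₄ a₁ hab2; simp only [he_def]; linarith [ea₁]
  have heb₂ : 0 < e b₂ := by
    have := lt₁ b₂ (Ne.symm hab2); simp only [he_def]; linarith [eb₂]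
  have heb₁ : e b₁ < 0 := by
    have := lt₃ b₁ (Ne.symm ha2b1); simp only [he_def]; linarith [eb₁]
  have hea₂ : 0 < e a₂ := by
    have := lt₂ a₂ ha2b1; simp only [he_def]; linarith [ea₂]
  obtain ⟨z₁, hz₁u, hz₁0, -, -⟩ := zero_between he hea₁ heb₂
  obtain ⟨z₂, hz₂u, hz₂0, -, -⟩ := zero_between he heb₁ hea₂
  have hz12 : z₁ = z₂ := hesub (by exact hz₁0) (by exact hz₂0)
  rcases Set.mem_uIcc.mp hz₁u with ⟨hA1, hA2⟩ | ⟨hA1, hA2⟩ <;>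
  rcases Set.mem_uIcc.mp hz₂u with ⟨hB1, hB2⟩ | ⟨hB1, hB2⟩ <;>
  rcases s₁ with ⟨h11, h12⟩ | ⟨h11, h12⟩ <;>
  rcases s₂ with ⟨h21, h22⟩ | ⟨h21, h22⟩ <;>
  rcases s₄ with ⟨h41, h42⟩ | ⟨h41, h42⟩ <;>
  linarith

end FourCycle

section Leaf

open scoped Classical in
/-- In a nonempty lower-tangency configuration there is a curve incident to exactly one
lower tangency. -/
lemma exists_leaf (L₁ L₂ : Finset (ℝ → ℝ))
    (hdisj : Disjoint L₁ L₂)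
    (hcont : ∀ f : ℝ → ℝ, f ∈ L₁ ∨ f ∈ L₂ → Continuous f)
    (hone : ∀ f g : ℝ → ℝ, (f ∈ L₁ ∨ f ∈ L₂) → (g ∈ L₁ ∨ g ∈ L₂) → f ≠ g →
      {x : ℝ | f x = g x}.Subsingleton)
    (hno3 : ∀ (x : ℝ) (f g h : ℝ → ℝ), (f ∈ L₁ ∨ f ∈ L₂) → (g ∈ L₁ ∨ g ∈ L₂) →
      (h ∈ L₁ ∨ h ∈ L₂) → f ≠ g → g ≠ h → f ≠ h →
      ¬ (f x = g x ∧ g x = h x))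
    (hint : ∀ f ∈ L₁, ∀ g ∈ L₂, ∃ x : ℝ, f x = g x)
    (hne : (TFlow L₁ L₂).Nonempty) :
    ∃ rb, rb ∈ TFlow L₁ L₂ ∧
      (((TFlow L₁ L₂).filter fun pr => pr.1 = rb.1) = {rb} ∨
       ((TFlow L₁ L₂).filter fun pr => pr.2 = rb.2) = {rb}) := by
  classical
  -- the finite set of all common points of pairs of curves
  set CP : Set ℝ :=
    {x | ∃ u v : ℝ → ℝ, (u ∈ L₁ ∨ u ∈ L₂) ∧ (v ∈ L₁ ∨ v ∈ L₂) ∧ u ≠ v ∧ u x = v x} with hCP_def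
  have hCPfin : CP.Finite := by
    have hsub : CP ⊆ ⋃ u ∈ (↑(L₁ ∪ L₂) : Set (ℝ → ℝ)), ⋃ v ∈ (↑(L₁ ∪ L₂) : Set (ℝ → ℝ)),
        {x | u ≠ v ∧ u x = v x} := by
      rintro x ⟨u, v, hu, hv, hne', hx⟩
      simp only [Set.mem_iUnion, Finset.coe_union, Set.mem_union, Finset.mem_coe,
        Set.mem_setOf_eq, exists_prop]
      exact ⟨u, hu, v, hv, hne', hx⟩
    refine Set.Finite.subset (Set.Finite.biUnion (L₁ ∪ L₂).finite_toSet fun u hu =>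
      Set.Finite.biUnion (L₁ ∪ L₂).finite_toSet fun v hv => ?_) hsub
    by_cases huv : u = v
    · subst huv
      have : {x | u ≠ u ∧ u x = u x} = (∅ : Set ℝ) := by ext x; simp
      rw [this]; exact Set.finite_empty
    · have hu' : u ∈ L₁ ∨ u ∈ L₂ := by simpa [Finset.mem_union] using hu
      have hv' : v ∈ L₁ ∨ v ∈ L₂ := by simpa [Finset.mem_union] using hv
      exact Set.Finite.subset (hone u v hu' hv' huv).finite fun x hx => hx.2
  obtain ⟨lb, hlb⟩ := hCPfin.bddBelow
  obtain ⟨ub, hub⟩ := hCPfin.bddAbove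
  set p : ℝ := lb - 1 with hp_def
  set q : ℝ := ub + 1 with hq_def
  have hcp : ∀ u v : ℝ → ℝ, (u ∈ L₁ ∨ u ∈ L₂) → (v ∈ L₁ ∨ v ∈ L₂) → u ≠ v →
      ∀ x, u x = v x → p < x ∧ x < q := by
    intro u v hu hv hne' x hx
    have hmem : x ∈ CP := ⟨u, v, hu, hv, hne', hx⟩
    have h1 := hlb hmem
    have h2 := hub hmem
    constructor <;> [skip; skip] <;> simp only [hp_def, hq_def] <;> linarith
  -- same order at p and q plus an intersection forces a lower tangency
  have key : ∀ f ∈ L₁, ∀ g ∈ L₂, f p < g p → f q < g q → (f, g) ∈ TFlow L₁ L₂ := by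
    intro f hf g hg hfp hfq
    have hne' : f ≠ g := by rintro rfl; exact Finset.disjoint_left.mp hdisj hf hg
    have mf : f ∈ L₁ ∨ f ∈ L₂ := Or.inl hf
    have mg : g ∈ L₁ ∨ g ∈ L₂ := Or.inr hg
    obtain ⟨x₀, hx₀⟩ := hint f hf g hg
    have hle : ∀ x, f x ≤ g x := by
      by_contra hcon
      push_neg at hcon
      obtain ⟨x₁, hx₁⟩ := hcon
      set w : ℝ → ℝ := fun x => g x - f x with hw_def
      have hw : Continuous w := (hcont g mg).sub (hcont f mf)
      have hwp : 0 < w p := by simp only [hw_def]; linarith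
      have hwq : 0 < w q := by simp only [hw_def]; linarith
      have hwx : w x₁ < 0 := by simp only [hw_def]; linarith
      obtain ⟨z₁, hz₁u, hz₁0, hz₁a, hz₁b⟩ := zero_between hw hwx hwp
      obtain ⟨z₂, hz₂u, hz₂0, hz₂a, hz₂b⟩ := zero_between hw hwx hwq
      have hz₁cp : f z₁ = g z₁ := by
        have : g z₁ - f z₁ = 0 := hz₁0
        linarith
      have hz₂cp : f z₂ = g z₂ := by
        have : g z₂ - f z₂ = 0 := hz₂0
        linarith
      have h₁ := hcp f g mf mg hne' z₁ hz₁cp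
      have h₂ := hcp f g mf mg hne' z₂ hz₂cp
      have hz₁lt : z₁ < x₁ := by
        rcases Set.mem_uIcc.mp hz₁u with ⟨ha, hb⟩ | ⟨ha, hb⟩
        · exact lt_of_le_of_ne (le_of_lt (lt_of_le_of_lt hb (by linarith [h₁.1])))
            (by intro h; exact hz₁a h)
        · exact lt_of_le_of_ne hb hz₁a
      have hz₂gt : x₁ < z₂ := by
        rcases Set.mem_uIcc.mp hz₂u with ⟨ha, hb⟩ | ⟨ha, hb⟩
        · exact lt_of_le_of_ne ha (fun h => hz₂a h.symm)
        · exact absurd (lt_of_lt_of_le h₂.2 (by linarith)) (lt_irrefl _)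
      have := hone f g mf mg hne' hz₁cp hz₂cp
      linarith [this]
    exact mem_TFlow.mpr ⟨hf, hg,
      ⟨⟨x₀, hx₀, fun y hy => hone f g mf mg hne' hy hx₀⟩, Or.inl hle⟩, hle⟩
  have order : ∀ f g : ℝ → ℝ, (f, g) ∈ TFlow L₁ L₂ → f p < g p ∧ f q < g q := by
    intro f g hfg
    obtain ⟨hf, hg, ht, hle⟩ := mem_TFlow.mp hfg
    have hne' : f ≠ g := by rintro rfl; exact Finset.disjoint_left.mp hdisj hf hg
    constructor
    · refine (hle p).lt_of_ne fun e => ?_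
      exact absurd (hcp f g (Or.inl hf) (Or.inr hg) hne' p e).1 (lt_irrefl p)
    · refine (hle q).lt_of_ne fun e => ?_
      exact absurd (hcp f g (Or.inl hf) (Or.inr hg) hne' q e).2 (lt_irrefl q)
  have notQ : ∀ f ∈ L₁, ∀ g ∈ L₂, (f, g) ∉ TFlow L₁ L₂ → f p < g p → g q < f q := by
    intro f hf g hg hnm hfp
    have hne' : f ≠ g := by rintro rfl; exact Finset.disjoint_left.mp hdisj hf hg
    have hq : f q ≠ g q := fun e =>
      absurd (hcp f g (Or.inl hf) (Or.inr hg) hne' q e).2 (lt_irrefl q)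
    rcases lt_or_gt_of_ne hq with h | h
    · exact absurd (key f hf g hg hfp h) hnm
    · exact h
  -- the participating red curve which is highest at -∞
  obtain ⟨⟨r0, b0⟩, hr0b0⟩ := hne
  set P : Finset (ℝ → ℝ) := L₁.filter (fun r => ∃ g, (r, g) ∈ TFlow L₁ L₂) with hP_def
  have hPne : P.Nonempty :=
    ⟨r0, Finset.mem_filter.mpr ⟨(mem_TFlow.mp hr0b0).1, ⟨b0, hr0b0⟩⟩⟩
  obtain ⟨rs, hrsP, hrsmax⟩ := P.exists_max_image (fun r => r p) hPne
  have hrs1 : rs ∈ L₁ := (Finset.mem_filter.mp hrsP).1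
  obtain ⟨b₀, hb₀⟩ := (Finset.mem_filter.mp hrsP).2
  have hb₀2 : b₀ ∈ L₂ := (mem_TFlow.mp hb₀).2.1
  by_cases hU : ∀ g, (rs, g) ∈ TFlow L₁ L₂ → g = b₀
  · -- rs is a leaf
    refine ⟨(rs, b₀), hb₀, Or.inl ?_⟩
    ext pr
    simp only [Finset.mem_filter, Finset.mem_singleton]
    constructor
    · rintro ⟨hm, h1⟩
      have h2 : pr.2 = b₀ := hU pr.2 (by rwa [← h1, Prod.mk.eta])
      exact Prod.ext h1 h2
    · rintro rfl; exact ⟨hb₀, rfl⟩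
  · push_neg at hU
    obtain ⟨b', hb', hbne⟩ := hU
    have hb'2 : b' ∈ L₂ := (mem_TFlow.mp hb').2.1
    by_cases hUb : ∀ r, (r, b₀) ∈ TFlow L₁ L₂ → r = rs
    · -- b₀ is a leaf
      refine ⟨(rs, b₀), hb₀, Or.inr ?_⟩
      ext pr
      simp only [Finset.mem_filter, Finset.mem_singleton]
      constructor
      · rintro ⟨hm, h2⟩
        have h1 : pr.1 = rs := hUb pr.1 (by rwa [← h2, Prod.mk.eta])
        exact Prod.ext h1 h2
      · rintro rfl; exact ⟨hb₀, rfl⟩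
    · by_cases hUb' : ∀ r, (r, b') ∈ TFlow L₁ L₂ → r = rs
      · -- b' is a leaf
        refine ⟨(rs, b'), hb', Or.inr ?_⟩
        ext pr
        simp only [Finset.mem_filter, Finset.mem_singleton]
        constructor
        · rintro ⟨hm, h2⟩
          have h1 : pr.1 = rs := hUb' pr.1 (by rwa [← h2, Prod.mk.eta])
          exact Prod.ext h1 h2
        · rintro rfl; exact ⟨hb', rfl⟩
      · exfalso
        push_neg at hUb hUb'
        obtain ⟨r₁, hr₁, hr₁ne⟩ := hUb
        obtain ⟨r₂, hr₂, hr₂ne⟩ := hUb'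
        have hr₁1 : r₁ ∈ L₁ := (mem_TFlow.mp hr₁).1
        have hr₂1 : r₂ ∈ L₁ := (mem_TFlow.mp hr₂).1
        by_cases hc1 : (r₁, b') ∈ TFlow L₁ L₂
        · exact fourcycle hdisj hcont hone hno3 hrs1 hr₁1 hb₀2 hb'2
            (Ne.symm hr₁ne) (Ne.symm hbne) hb₀ hr₁ hc1 hb'
        · by_cases hc2 : (r₂, b₀) ∈ TFlow L₁ L₂
          · exact fourcycle hdisj hcont hone hno3 hrs1 hr₂1 hb₀2 hb'2
              (Ne.symm hr₂ne) (Ne.symm hbne) hb₀ hc2 hr₂ hb'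
          · have hr₁P : r₁ ∈ P := Finset.mem_filter.mpr ⟨hr₁1, ⟨b₀, hr₁⟩⟩
            have hr₂P : r₂ ∈ P := Finset.mem_filter.mpr ⟨hr₂1, ⟨b', hr₂⟩⟩
            have h1 := order rs b₀ hb₀
            have h2 := order rs b' hb'
            have h3 := order r₁ b₀ hr₁
            have h4 := order r₂ b' hr₂
            have hr₁p : r₁ p < b' p := lt_of_le_of_lt (hrsmax r₁ hr₁P) h2.1
            have hr₂p : r₂ p < b₀ p := lt_of_le_of_lt (hrsmax r₂ hr₂P) h1.1
            have k₁ := notQ r₁ hr₁1 b' hb'2 hc1 hr₁p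
            have k₂ := notQ r₂ hr₂1 b₀ hb₀2 hc2 hr₂p
            linarith [h3.2, h4.2]

end Leaf

open scoped Classical in
lemma tflow_bound : ∀ (N : ℕ) (L₁ L₂ : Finset (ℝ → ℝ)),
    L₁.card + L₂.card ≤ N →
    Disjoint L₁ L₂ →
    (∀ f : ℝ → ℝ, f ∈ L₁ ∨ f ∈ L₂ → Continuous f) →
    (∀ f g : ℝ → ℝ, (f ∈ L₁ ∨ f ∈ L₂) → (g ∈ L₁ ∨ g ∈ L₂) → f ≠ g →
      {x : ℝ | f x = g x}.Subsingleton) →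
    (∀ (x : ℝ) (f g h : ℝ → ℝ), (f ∈ L₁ ∨ f ∈ L₂) → (g ∈ L₁ ∨ g ∈ L₂) →
      (h ∈ L₁ ∨ h ∈ L₂) → f ≠ g → g ≠ h → f ≠ h →
      ¬ (f x = g x ∧ g x = h x)) →
    (∀ f ∈ L₁, ∀ g ∈ L₂, ∃ x : ℝ, f x = g x) →
    (TFlow L₁ L₂).card ≤ L₁.card + L₂.card - 1 := by
  intro N
  induction N with
  | zero =>
    intro L₁ L₂ hN _ _ _ _ _
    have h1 : L₁ = ∅ := Finset.card_eq_zero.mp (by omega)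
    subst h1
    have : TFlow ∅ L₂ = ∅ := by
      apply Finset.eq_empty_of_forall_notMem
      intro pr hpr
      exact absurd (mem_TFlow.mp hpr).1 (Finset.notMem_empty _)
    simp [this]
  | succ N ih =>
    intro L₁ L₂ hN hdisj hcont hone hno3 hint
    by_cases hne : (TFlow L₁ L₂).Nonempty
    · obtain ⟨⟨r, b⟩, hrb, hleaf | hleaf⟩ :=
        exists_leaf L₁ L₂ hdisj hcont hone hno3 hint hne
      · -- red leaf : erase r from L₁
        have hr : r ∈ L₁ := (mem_TFlow.mp hrb).1
        have hbm : b ∈ L₂ := (mem_TFlow.mp hrb).2.1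
        have hsplit := Finset.card_filter_add_card_filter_not
          (s := TFlow L₁ L₂) (p := fun pr => pr.1 = r)
        have hrest : (TFlow L₁ L₂).filter (fun pr => ¬ pr.1 = r) =
            TFlow (L₁.erase r) L₂ := by
          ext pr
          simp only [Finset.mem_filter, mem_TFlow, Finset.mem_erase]
          tauto
        have hcard1 : ((TFlow L₁ L₂).filter (fun pr => pr.1 = r)).card = 1 := by
          rw [hleaf]; exact Finset.card_singleton _
        have hLc : 1 ≤ L₁.card := Finset.card_pos.mpr ⟨r, hr⟩
        have hL2c : 1 ≤ L₂.card := Finset.card_pos.mpr ⟨b, hbm⟩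
        have hec : (L₁.erase r).card = L₁.card - 1 := Finset.card_erase_of_mem hr
        have hIH := ih (L₁.erase r) L₂ (by omega)
          (hdisj.mono_left (Finset.erase_subset r L₁))
          (fun f hf => hcont f (hf.imp (Finset.mem_of_mem_erase) id))
          (fun f g hf hg => hone f g (hf.imp Finset.mem_of_mem_erase id)
            (hg.imp Finset.mem_of_mem_erase id))
          (fun x f g h hf hg hh => hno3 x f g h (hf.imp Finset.mem_of_mem_erase id)
            (hg.imp Finset.mem_of_mem_erase id) (hh.imp Finset.mem_of_mem_erase id))
          (fun f hf g hg => hint f (Finset.mem_of_mem_erase hf) g hg)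
        rw [hrest, hcard1] at hsplit
        omega
      · -- blue leaf : erase b from L₂
        have hr : r ∈ L₁ := (mem_TFlow.mp hrb).1
        have hbm : b ∈ L₂ := (mem_TFlow.mp hrb).2.1
        have hsplit := Finset.card_filter_add_card_filter_not
          (s := TFlow L₁ L₂) (p := fun pr => pr.2 = b)
        have hrest : (TFlow L₁ L₂).filter (fun pr => ¬ pr.2 = b) =
            TFlow L₁ (L₂.erase b) := by
          ext pr
          simp only [Finset.mem_filter, mem_TFlow, Finset.mem_erase]
          tauto
        have hcard1 : ((TFlow L₁ L₂).filter (fun pr => pr.2 = b)).card = 1 := by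
          rw [hleaf]; exact Finset.card_singleton _
        have hLc : 1 ≤ L₁.card := Finset.card_pos.mpr ⟨r, hr⟩
        have hL2c : 1 ≤ L₂.card := Finset.card_pos.mpr ⟨b, hbm⟩
        have hec : (L₂.erase b).card = L₂.card - 1 := Finset.card_erase_of_mem hbm
        have hIH := ih L₁ (L₂.erase b) (by omega)
          (hdisj.mono_right (Finset.erase_subset b L₂))
          (fun f hf => hcont f (hf.imp id Finset.mem_of_mem_erase))
          (fun f g hf hg => hone f g (hf.imp id Finset.mem_of_mem_erase)
            (hg.imp id Finset.mem_of_mem_erase))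
          (fun x f g h hf hg hh => hno3 x f g h (hf.imp id Finset.mem_of_mem_erase)
            (hg.imp id Finset.mem_of_mem_erase) (hh.imp id Finset.mem_of_mem_erase))
          (fun f hf g hg => hint f hf g (Finset.mem_of_mem_erase hg))
        rw [hrest, hcard1] at hsplit
        omega
    · rw [Finset.not_nonempty_iff_eq_empty] at hne
      simp [hne]

theorem stmt9 (n : ℕ) (L₁ L₂ : Finset (ℝ → ℝ))
    (hdisj : Disjoint L₁ L₂)
    (hcard : L₁.card + L₂.card = n)
    (hcont : ∀ f : ℝ → ℝ, f ∈ L₁ ∨ f ∈ L₂ → Continuous f)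
    (hone : ∀ f g : ℝ → ℝ, (f ∈ L₁ ∨ f ∈ L₂) → (g ∈ L₁ ∨ g ∈ L₂) → f ≠ g →
      {x : ℝ | f x = g x}.Subsingleton)
    (hno3 : ∀ (x : ℝ) (f g h : ℝ → ℝ), (f ∈ L₁ ∨ f ∈ L₂) → (g ∈ L₁ ∨ g ∈ L₂) →
      (h ∈ L₁ ∨ h ∈ L₂) → f ≠ g → g ≠ h → f ≠ h →
      ¬ (f x = g x ∧ g x = h x))
    (hint : ∀ f ∈ L₁, ∀ g ∈ L₂, ∃ x : ℝ, f x = g x) :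
    {p : (ℝ → ℝ) × (ℝ → ℝ) | p.1 ∈ L₁ ∧ p.2 ∈ L₂ ∧ Tangent p.1 p.2}.ncard ≤
      2 * (n - 1) := by
  classical
  have hlow := tflow_bound n L₁ L₂ (le_of_eq hcard) hdisj hcont hone hno3 hint
  have hup := tflow_bound n L₂ L₁ (by omega) hdisj.symm
    (fun f hf => hcont f hf.symm)
    (fun f g hf hg => hone f g hf.symm hg.symm)
    (fun x f g h hf hg hh => hno3 x f g h hf.symm hg.symm hh.symm)
    (fun f hf g hg => (hint g hg f hf).imp fun x h => h.symm)
  set Fup := (TFlow L₂ L₁).image Prod.swap with hFup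
  have hFupcard : Fup.card = (TFlow L₂ L₁).card :=
    Finset.card_image_of_injective _ Prod.swap_injective
  have hset : {p : (ℝ → ℝ) × (ℝ → ℝ) | p.1 ∈ L₁ ∧ p.2 ∈ L₂ ∧ Tangent p.1 p.2} =
      ↑(TFlow L₁ L₂ ∪ Fup) := by
    ext ⟨f, g⟩
    simp only [Set.mem_setOf_eq, Finset.coe_union, Set.mem_union, Finset.mem_coe,
      hFup, Finset.mem_image]
    constructor
    · rintro ⟨hf, hg, ht⟩
      rcases ht.2 with hle | hle
      · exact Or.inl (mem_TFlow.mpr ⟨hf, hg, ht, hle⟩)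
      · exact Or.inr ⟨(g, f), mem_TFlow.mpr ⟨hg, hf, tangent_comm ht, hle⟩, rfl⟩
    · rintro (hm | ⟨⟨g', f'⟩, hm, heq⟩)
      · obtain ⟨hf, hg, ht, -⟩ := mem_TFlow.mp hm
        exact ⟨hf, hg, ht⟩
      · obtain ⟨hf', hg'⟩ : f' = f ∧ g' = g := by
          simpa [Prod.ext_iff] using heq
        rw [hf', hg'] at hm
        obtain ⟨hg2, hf2, ht2, -⟩ := mem_TFlow.mp hm
        exact ⟨hf2, hg2, tangent_comm ht2⟩
  have hdisjFU : Disjoint (TFlow L₁ L₂) Fup := by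
    rw [Finset.disjoint_left]
    rintro ⟨f, g⟩ hm1 hm2
    obtain ⟨hf, hg, ht, hle⟩ := mem_TFlow.mp hm1
    simp only [hFup, Finset.mem_image] at hm2
    obtain ⟨⟨g', f'⟩, hm, heq⟩ := hm2
    obtain ⟨hf', hg'⟩ : f' = f ∧ g' = g := by simpa [Prod.ext_iff] using heq
    rw [hf', hg'] at hm
    obtain ⟨hg2, hf2, ht2, hle2⟩ := mem_TFlow.mp hm
    have : f = g := funext fun x => le_antisymm (hle x) (hle2 x)
    exact Finset.disjoint_left.mp hdisj hf (this ▸ hg)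
  rw [hset, Set.ncard_coe_finset, Finset.card_union_of_disjoint hdisjFU, hFupcard]
  omega
end

section
/- Let L₁ and L₂ be two disjoint finite families of pairwise distinct continuous functions ℝ → ℝ whose union has n members in total, such that every two functions in the union have at most one common point, no three of them share a common point, and every f ∈ L₁ starts below every g ∈ L₂. Then the number of tangent pairs (f, g) with f ∈ L₁ and g ∈ L₂ is at most n − 1. -/
/-- `f` starts below `g`: either `f` lies (weakly) below `g` everywhere, or the set of
common points is nonempty and `f` is strictly below `g` to the left of all common points. -/
def StartsBelow (f g : ℝ → ℝ) : Prop :=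
  (∀ x, f x ≤ g x) ∨
    ({x : ℝ | f x = g x}.Nonempty ∧ ∀ x < sInf {x : ℝ | f x = g x}, f x < g x)

open Classical in
/-- The tangency point of a pair of curves (junk value if not unique). -/
noncomputable def tpt (p : (ℝ → ℝ) × (ℝ → ℝ)) : ℝ :=
  if h : ∃! x, p.1 x = p.2 x then Classical.choose h else 0

lemma tpt_spec {p : (ℝ → ℝ) × (ℝ → ℝ)} (h : ∃! x, p.1 x = p.2 x) :
    p.1 (tpt p) = p.2 (tpt p) ∧ ∀ y, p.1 y = p.2 y → y = tpt p := by
  classical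
  unfold tpt
  rw [dif_pos h]
  exact Classical.choose_spec h

lemma ivt_zero {F : ℝ → ℝ} (hF : Continuous F) {p q : ℝ} (hpq : p ≤ q)
    (hp : 0 < F p) (hq : F q < 0) : ∃ c ∈ Set.Icc p q, F c = 0 := by
  have h := intermediate_value_Icc' hpq hF.continuousOn
    (show (0 : ℝ) ∈ Set.Icc (F q) (F p) from ⟨hq.le, hp.le⟩)
  obtain ⟨c, hc, hc0⟩ := h
  exact ⟨c, hc, hc0⟩

lemma ivt_zero' {F : ℝ → ℝ} (hF : Continuous F) {p q : ℝ} (hpq : p ≤ q)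
    (hp : F p < 0) (hq : 0 < F q) : ∃ c ∈ Set.Icc p q, F c = 0 := by
  have h := intermediate_value_Icc hpq hF.continuousOn
    (show (0 : ℝ) ∈ Set.Icc (F p) (F q) from ⟨hp.le, hq.le⟩)
  obtain ⟨c, hc, hc0⟩ := h
  exact ⟨c, hc, hc0⟩

/-- If `u` is below `v` at `p` and above at `q > p`, and they have at most one common
point, then there is a crossing point `c ∈ (p,q)` with `u < v` strictly before and
`u > v` strictly after. -/
lemma cross_lemma {u v : ℝ → ℝ} (hu : Continuous u) (hv : Continuous v)
    (hsub : {x : ℝ | u x = v x}.Subsingleton) {p q : ℝ} (hpq : p < q)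
    (hp : u p < v p) (hq : v q < u q) :
    ∃ c, p < c ∧ c < q ∧ u c = v c ∧ (∀ x, x < c → u x < v x) ∧ (∀ x, c < x → v x < u x) := by
  have hF : Continuous (fun x => v x - u x) := hv.sub hu
  obtain ⟨c, hc, hc0⟩ := ivt_zero hF hpq.le (by simp [sub_pos, hp]) (by simp [sub_neg, hq])
  have hceq : u c = v c := by linarith
  have hmem : c ∈ {x : ℝ | u x = v x} := hceq
  have hcp : p < c := by
    rcases lt_or_eq_of_le hc.1 with h | h
    · exact h
    · exfalso; rw [← h] at hceq; exact absurd hceq hp.ne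
  have hcq : c < q := by
    rcases lt_or_eq_of_le hc.2 with h | h
    · exact h
    · exfalso; rw [h] at hceq; exact absurd hceq.symm hq.ne
  have key : ∀ x, x ≠ c → u x ≠ v x := fun x hx e => hx (hsub e hmem)
  refine ⟨c, hcp, hcq, hceq, ?_, ?_⟩
  · intro x hx
    rcases lt_or_gt_of_ne (key x hx.ne) with h | h
    · exact h
    · exfalso
      rcases lt_trichotomy x p with h1 | h1 | h1
      · obtain ⟨z, hz, hz0⟩ := ivt_zero' hF h1.le (by simp [sub_neg, h]) (by simp [sub_pos, hp])
        have hzc : z = c := hsub (show u z = v z by linarith) hmem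
        have := hz.2
        linarith
      · subst h1; linarith
      · obtain ⟨z, hz, hz0⟩ := ivt_zero hF h1.le (by simp [sub_pos, hp]) (by simp [sub_neg, h])
        have hzc : z = c := hsub (show u z = v z by linarith) hmem
        have := hz.2
        linarith
  · intro x hx
    rcases lt_or_gt_of_ne (key x hx.ne') with h | h
    · exfalso
      rcases lt_trichotomy x q with h1 | h1 | h1
      · obtain ⟨z, hz, hz0⟩ := ivt_zero hF h1.le (by simp [sub_pos, h]) (by simp [sub_neg, hq])
        have hzc : z = c := hsub (show u z = v z by linarith) hmem
        have := hz.1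
        linarith
      · subst h1; linarith
      · obtain ⟨z, hz, hz0⟩ := ivt_zero' hF h1.le (by simp [sub_neg, hq]) (by simp [sub_pos, h])
        have hzc : z = c := hsub (show u z = v z by linarith) hmem
        have := hz.1
        linarith
    · exact h

/-- A curve that starts below another 1-intersecting curve cannot be strictly above it
at some point and strictly below at a later point. -/
lemma below_contra {f g : ℝ → ℝ} (hf : Continuous f) (hg : Continuous g)
    (hsub : {x : ℝ | f x = g x}.Subsingleton) (hsb : StartsBelow f g)
    {p q : ℝ} (hpq : p < q) (hp : g p < f p) (hq : f q < g q) : False := by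
  have hF : Continuous (fun x => g x - f x) := hg.sub hf
  obtain ⟨c, hc, hc0⟩ := ivt_zero' hF hpq.le (by simp [sub_neg, hp]) (by simp [sub_pos, hq])
  have hceq : f c = g c := by linarith
  have hZ : {x : ℝ | f x = g x} = {c} := hsub.eq_singleton_of_mem hceq
  have hcp : p < c := by
    rcases lt_or_eq_of_le hc.1 with h | h
    · exact h
    · exfalso; rw [← h] at hceq; linarith
  rcases hsb with h | ⟨_, hlt⟩
  · linarith [h p]
  · have := hlt p (by rw [hZ, csInf_singleton]; exact hcp)
    linarith

/-- Key geometric lemma: the two endpoints of the rightmost tangency cannot both have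
other tangencies. -/
lemma leaf_lemma {f g f' g' : ℝ → ℝ} {T a b : ℝ}
    (hf : Continuous f) (hg : Continuous g) (hf' : Continuous f') (hg' : Continuous g')
    (hsub_ff' : {x : ℝ | f x = f' x}.Subsingleton)
    (hsub_g'g : {x : ℝ | g' x = g x}.Subsingleton)
    (hsub_f'g' : {x : ℝ | f' x = g' x}.Subsingleton)
    (hsb : StartsBelow f' g')
    (no3a : ∀ x, ¬ (f' x = f x ∧ f x = g' x))
    (no3b : ∀ x, ¬ (f' x = g x ∧ g x = g' x))
    (hfgT : f T = g T) (hfglt : ∀ x, x ≠ T → f x < g x)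
    (hfg'a : f a = g' a) (hfg'lt : ∀ x, x ≠ a → f x < g' x)
    (hf'gb : f' b = g b) (hf'glt : ∀ x, x ≠ b → f' x < g x)
    (haT : a < T) (hbT : b < T) : False := by
  have h1 : f b < f' b := by rw [hf'gb]; exact hfglt b hbT.ne
  have h2 : f' T < f T := by rw [hfgT]; exact hf'glt T hbT.ne'
  obtain ⟨α, hbα, hαT, hfα, hltα, hgtα⟩ := cross_lemma hf hf' hsub_ff' hbT h1 h2
  have h3 : g' a < g a := by rw [← hfg'a]; exact hfglt a haT.ne
  have h4 : g T < g' T := by rw [← hfgT]; exact hfg'lt T haT.ne'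
  obtain ⟨β, haβ, hβT, hg'β, hltβ, hgtβ⟩ := cross_lemma hg' hg hsub_g'g haT h3 h4
  have hf'T : f' T < g' T := by
    have h5 := hgtα T hαT
    linarith
  rcases lt_trichotomy a α with h | h | h
  · have hpa : g' a < f' a := by rw [← hfg'a]; exact hltα a h
    exact below_contra hf' hg' hsub_f'g' hsb haT hpa hf'T
  · exact no3a α ⟨hfα.symm, by rw [← h]; exact hfg'a⟩
  · rcases lt_trichotomy b β with h' | h' | h'
    · have hpb : g' b < f' b := by rw [hf'gb]; exact hltβ b h'
      exact below_contra hf' hg' hsub_f'g' hsb hbT hpb hf'T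
    · exact no3b β ⟨by rw [← h']; exact hf'gb, hg'β.symm⟩
    · linarith

lemma ncard_eq_filter (A B : Finset (ℝ → ℝ))
    [DecidablePred fun p : (ℝ → ℝ) × (ℝ → ℝ) => Tangent p.1 p.2] :
    {p : (ℝ → ℝ) × (ℝ → ℝ) | p.1 ∈ A ∧ p.2 ∈ B ∧ Tangent p.1 p.2}.ncard
      = ((A ×ˢ B).filter fun p => Tangent p.1 p.2).card := by
  rw [← Set.ncard_coe_finset]
  congr 1
  ext p
  simp [Finset.mem_filter, Finset.mem_product, and_assoc]

lemma aux : ∀ (n : ℕ) (L₁ L₂ : Finset (ℝ → ℝ)),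
    Disjoint L₁ L₂ → L₁.card + L₂.card = n →
    (∀ f : ℝ → ℝ, f ∈ L₁ ∨ f ∈ L₂ → Continuous f) →
    (∀ f g : ℝ → ℝ, (f ∈ L₁ ∨ f ∈ L₂) → (g ∈ L₁ ∨ g ∈ L₂) → f ≠ g →
      {x : ℝ | f x = g x}.Subsingleton) →
    (∀ (x : ℝ) (f g h : ℝ → ℝ), (f ∈ L₁ ∨ f ∈ L₂) → (g ∈ L₁ ∨ g ∈ L₂) →
      (h ∈ L₁ ∨ h ∈ L₂) → f ≠ g → g ≠ h → f ≠ h →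
      ¬ (f x = g x ∧ g x = h x)) →
    (∀ f ∈ L₁, ∀ g ∈ L₂, StartsBelow f g) →
    {p : (ℝ → ℝ) × (ℝ → ℝ) | p.1 ∈ L₁ ∧ p.2 ∈ L₂ ∧ Tangent p.1 p.2}.ncard ≤ n - 1 := by
  intro n
  induction n using Nat.strong_induction_on with
  | _ n ih =>
  intro L₁ L₂ hdisj hcard hcont hone hno3 hbelow
  classical
  rw [ncard_eq_filter]
  set S := ((L₁ ×ˢ L₂).filter fun p => Tangent p.1 p.2) with hSdef
  rcases S.eq_empty_or_nonempty with hSe | hS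
  · rw [hSe]
    simp
  obtain ⟨⟨f, g⟩, hfgS, hmax⟩ := Finset.exists_max_image S tpt hS
  have hfgS' := Finset.mem_filter.mp hfgS
  have hfL : f ∈ L₁ := (Finset.mem_product.mp hfgS'.1).1
  have hgL : g ∈ L₂ := (Finset.mem_product.mp hfgS'.1).2
  have htang : Tangent f g := hfgS'.2
  have hneq : ∀ u ∈ L₁, ∀ v ∈ L₂, u ≠ v := fun u hu v hv e =>
    Finset.disjoint_left.mp hdisj hu (e ▸ hv)
  have horient : ∀ u ∈ L₁, ∀ v ∈ L₂, Tangent u v →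
      (u (tpt (u, v)) = v (tpt (u, v)) ∧ ∀ x, x ≠ tpt (u, v) → u x < v x) := by
    intro u hu v hv htv
    have hsubuv := hone u v (Or.inl hu) (Or.inr hv) (hneq u hu v hv)
    obtain ⟨hex, hside⟩ := htv
    have hspec := tpt_spec (p := (u, v)) hex
    refine ⟨hspec.1, ?_⟩
    rcases hside with hle | hge
    · intro x hx
      exact lt_of_le_of_ne (hle x) (fun e => hx (hspec.2 x e))
    · exfalso
      rcases hbelow u hu v hv with h1 | ⟨_, hlt⟩
      · exact hneq u hu v hv (funext fun x => le_antisymm (h1 x) (hge x))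
      · have hZ : {x : ℝ | u x = v x} = {tpt (u, v)} :=
          hsubuv.eq_singleton_of_mem hspec.1
        have := hlt (tpt (u, v) - 1) (by rw [hZ, csInf_singleton]; linarith)
        exact absurd this (not_lt.mpr (hge _))
  obtain ⟨hfgT, hfglt⟩ := horient f hfL g hgL htang
  have h1c : 1 ≤ L₁.card := Finset.card_pos.mpr ⟨f, hfL⟩
  have h2c : 1 ≤ L₂.card := Finset.card_pos.mpr ⟨g, hgL⟩
  by_cases hdf : ∃ g' ∈ L₂, g' ≠ g ∧ Tangent f g'
  · by_cases hdg : ∃ f' ∈ L₁, f' ≠ f ∧ Tangent f' g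
    · exfalso
      obtain ⟨g', hg'L, hg'ne, htg'⟩ := hdf
      obtain ⟨f', hf'L, hf'ne, htf'⟩ := hdg
      obtain ⟨hfg'a, hfg'lt⟩ := horient f hfL g' hg'L htg'
      obtain ⟨hf'gb, hf'glt⟩ := horient f' hf'L g hgL htf'
      have haS : (f, g') ∈ S :=
        Finset.mem_filter.mpr ⟨Finset.mem_product.mpr ⟨hfL, hg'L⟩, htg'⟩
      have hbS : (f', g) ∈ S :=
        Finset.mem_filter.mpr ⟨Finset.mem_product.mpr ⟨hf'L, hgL⟩, htf'⟩
      have haT : tpt (f, g') < tpt (f, g) := by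
        rcases lt_or_eq_of_le (hmax _ haS) with h | h
        · exact h
        · exfalso
          exact hno3 (tpt (f, g)) g f g' (Or.inr hgL) (Or.inl hfL) (Or.inr hg'L)
            (Ne.symm (hneq f hfL g hgL)) (hneq f hfL g' hg'L) (Ne.symm hg'ne)
            ⟨hfgT.symm, by rw [← h]; exact hfg'a⟩
      have hbT : tpt (f', g) < tpt (f, g) := by
        rcases lt_or_eq_of_le (hmax _ hbS) with h | h
        · exact h
        · exfalso
          exact hno3 (tpt (f, g)) f' g f (Or.inl hf'L) (Or.inr hgL) (Or.inl hfL)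
            (hneq f' hf'L g hgL) (Ne.symm (hneq f hfL g hgL)) hf'ne
            ⟨by rw [← h]; exact hf'gb, hfgT.symm⟩
      exact leaf_lemma (hcont f (Or.inl hfL)) (hcont g (Or.inr hgL))
        (hcont f' (Or.inl hf'L)) (hcont g' (Or.inr hg'L))
        (hone f f' (Or.inl hfL) (Or.inl hf'L) (Ne.symm hf'ne))
        (hone g' g (Or.inr hg'L) (Or.inr hgL) hg'ne)
        (hone f' g' (Or.inl hf'L) (Or.inr hg'L) (hneq f' hf'L g' hg'L))
        (hbelow f' hf'L g' hg'L)
        (fun x => hno3 x f' f g' (Or.inl hf'L) (Or.inl hfL) (Or.inr hg'L)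
          hf'ne (hneq f hfL g' hg'L) (hneq f' hf'L g' hg'L))
        (fun x => hno3 x f' g g' (Or.inl hf'L) (Or.inr hgL) (Or.inr hg'L)
          (hneq f' hf'L g hgL) (Ne.symm hg'ne) (hneq f' hf'L g' hg'L))
        hfgT hfglt hfg'a hfg'lt hf'gb hf'glt haT hbT
    · -- g has no other tangency partner: remove g
      set S' := ((L₁ ×ˢ (L₂.erase g)).filter fun p => Tangent p.1 p.2) with hS'def
      have hsubst : S = insert (f, g) S' := by
        ext ⟨u, v⟩
        constructor
        · intro hm
          rw [hSdef] at hm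
          obtain ⟨hmem, ht⟩ := Finset.mem_filter.mp hm
          obtain ⟨hu, hv⟩ := Finset.mem_product.mp hmem
          by_cases hvg : v = g
          · subst hvg
            by_cases huf : u = f
            · subst huf; exact Finset.mem_insert_self _ _
            · exact absurd ⟨u, hu, huf, ht⟩ hdg
          · refine Finset.mem_insert_of_mem ?_
            rw [hS'def]
            exact Finset.mem_filter.mpr
              ⟨Finset.mem_product.mpr ⟨hu, Finset.mem_erase.mpr ⟨hvg, hv⟩⟩, ht⟩
        · intro hm
          rcases Finset.mem_insert.mp hm with he | hm'
          · rw [hSdef, he]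
            exact Finset.mem_filter.mpr ⟨Finset.mem_product.mpr ⟨hfL, hgL⟩, htang⟩
          · rw [hS'def] at hm'
            obtain ⟨hmem, ht⟩ := Finset.mem_filter.mp hm'
            obtain ⟨hu, hv⟩ := Finset.mem_product.mp hmem
            rw [hSdef]
            exact Finset.mem_filter.mpr
              ⟨Finset.mem_product.mpr ⟨hu, Finset.mem_of_mem_erase hv⟩, ht⟩
      have hnm : (f, g) ∉ S' := by
        rw [hS'def]
        intro hm
        exact (Finset.mem_erase.mp
          (Finset.mem_product.mp (Finset.mem_filter.mp hm).1).2).1 rfl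
      have hcardS : S.card = S'.card + 1 := by
        rw [hsubst, Finset.card_insert_of_notMem hnm]
      have ihres := ih (n - 1) (by omega) L₁ (L₂.erase g)
        (hdisj.mono_right (Finset.erase_subset _ _))
        (by rw [Finset.card_erase_of_mem hgL]; omega)
        (fun u hu => hcont u (hu.imp id Finset.mem_of_mem_erase))
        (fun u v hu hv huv => hone u v (hu.imp id Finset.mem_of_mem_erase)
          (hv.imp id Finset.mem_of_mem_erase) huv)
        (fun x u v w hu hv hw e1 e2 e3 => hno3 x u v w (hu.imp id Finset.mem_of_mem_erase)
          (hv.imp id Finset.mem_of_mem_erase) (hw.imp id Finset.mem_of_mem_erase) e1 e2 e3)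
        (fun u hu v hv => hbelow u hu v (Finset.mem_of_mem_erase hv))
      rw [ncard_eq_filter] at ihres
      rw [← hS'def] at ihres
      omega
  · -- f has no other tangency partner: remove f
    set S' := (((L₁.erase f) ×ˢ L₂).filter fun p => Tangent p.1 p.2) with hS'def
    have hsubst : S = insert (f, g) S' := by
      ext ⟨u, v⟩
      constructor
      · intro hm
        rw [hSdef] at hm
        obtain ⟨hmem, ht⟩ := Finset.mem_filter.mp hm
        obtain ⟨hu, hv⟩ := Finset.mem_product.mp hmem
        by_cases huf : u = f
        · subst huf
          by_cases hvg : v = g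
          · subst hvg; exact Finset.mem_insert_self _ _
          · exact absurd ⟨v, hv, hvg, ht⟩ hdf
        · refine Finset.mem_insert_of_mem ?_
          rw [hS'def]
          exact Finset.mem_filter.mpr
            ⟨Finset.mem_product.mpr ⟨Finset.mem_erase.mpr ⟨huf, hu⟩, hv⟩, ht⟩
      · intro hm
        rcases Finset.mem_insert.mp hm with he | hm'
        · rw [hSdef, he]
          exact Finset.mem_filter.mpr ⟨Finset.mem_product.mpr ⟨hfL, hgL⟩, htang⟩
        · rw [hS'def] at hm'
          obtain ⟨hmem, ht⟩ := Finset.mem_filter.mp hm'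
          obtain ⟨hu, hv⟩ := Finset.mem_product.mp hmem
          rw [hSdef]
          exact Finset.mem_filter.mpr
            ⟨Finset.mem_product.mpr ⟨Finset.mem_of_mem_erase hu, hv⟩, ht⟩
    have hnm : (f, g) ∉ S' := by
      rw [hS'def]
      intro hm
      exact (Finset.mem_erase.mp
        (Finset.mem_product.mp (Finset.mem_filter.mp hm).1).1).1 rfl
    have hcardS : S.card = S'.card + 1 := by
      rw [hsubst, Finset.card_insert_of_notMem hnm]
    have ihres := ih (n - 1) (by omega) (L₁.erase f) L₂
      (hdisj.mono_left (Finset.erase_subset _ _))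
      (by rw [Finset.card_erase_of_mem hfL]; omega)
      (fun u hu => hcont u (hu.imp Finset.mem_of_mem_erase id))
      (fun u v hu hv huv => hone u v (hu.imp Finset.mem_of_mem_erase id)
        (hv.imp Finset.mem_of_mem_erase id) huv)
      (fun x u v w hu hv hw e1 e2 e3 => hno3 x u v w (hu.imp Finset.mem_of_mem_erase id)
        (hv.imp Finset.mem_of_mem_erase id) (hw.imp Finset.mem_of_mem_erase id) e1 e2 e3)
      (fun u hu v hv => hbelow u (Finset.mem_of_mem_erase hu) v hv)
    rw [ncard_eq_filter] at ihres
    rw [← hS'def] at ihres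
    omega

theorem stmt10 (n : ℕ) (L₁ L₂ : Finset (ℝ → ℝ))
    (hdisj : Disjoint L₁ L₂)
    (hcard : L₁.card + L₂.card = n)
    (hcont : ∀ f : ℝ → ℝ, f ∈ L₁ ∨ f ∈ L₂ → Continuous f)
    (hone : ∀ f g : ℝ → ℝ, (f ∈ L₁ ∨ f ∈ L₂) → (g ∈ L₁ ∨ g ∈ L₂) → f ≠ g →
      {x : ℝ | f x = g x}.Subsingleton)
    (hno3 : ∀ (x : ℝ) (f g h : ℝ → ℝ), (f ∈ L₁ ∨ f ∈ L₂) → (g ∈ L₁ ∨ g ∈ L₂) →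
      (h ∈ L₁ ∨ h ∈ L₂) → f ≠ g → g ≠ h → f ≠ h →
      ¬ (f x = g x ∧ g x = h x))
    (hbelow : ∀ f ∈ L₁, ∀ g ∈ L₂, StartsBelow f g) :
    {p : (ℝ → ℝ) × (ℝ → ℝ) | p.1 ∈ L₁ ∧ p.2 ∈ L₂ ∧ Tangent p.1 p.2}.ncard ≤ n - 1 := by
  exact aux n L₁ L₂ hdisj hcard hcont hone hno3 hbelow
end

section
/- Let a, b, c, d : ℝ → ℝ be four pairwise distinct continuous functions, and let (e, [p₁, q₁]) and (f, [p₂, q₂]) be two distinct x-monotone curves (e continuous on [p₁, q₁], f continuous on [p₂, q₂]). Suppose that the family of six curves {a, b, c, d, e, f} is 1-intersecting (every two of the six curves have at most one common point, where common points involving e or f are restricted to the relevant domains), that no three of the six curves share a common point, and that each of e and f touches each of a, b, c, d from below. Then a contradiction follows; i.e., no such configuration exists. -/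
/-- The graphs (as subsets of the plane) of the six curves: the four bi-infinite
`x`-monotone curves `a, b, c, d` and the two `x`-monotone curves `(e, [p₁, q₁])`
and `(f, [p₂, q₂])`. -/
def curveGraphs (a b c d e f : ℝ → ℝ) (p₁ q₁ p₂ q₂ : ℝ) : Fin 6 → Set (ℝ × ℝ) :=
  ![{z : ℝ × ℝ | z.2 = a z.1}, {z : ℝ × ℝ | z.2 = b z.1},
    {z : ℝ × ℝ | z.2 = c z.1}, {z : ℝ × ℝ | z.2 = d z.1},
    {z : ℝ × ℝ | z.1 ∈ Set.Icc p₁ q₁ ∧ z.2 = e z.1},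
    {z : ℝ × ℝ | z.1 ∈ Set.Icc p₂ q₂ ∧ z.2 = f z.1}]

/-- The `x`-monotone curve `(e, [p, q])` touches the bi-infinite curve `g` from below:
exactly one common point, and `e ≤ g` on the whole domain `[p, q]`. -/
def TouchesFromBelow (e : ℝ → ℝ) (p q : ℝ) (g : ℝ → ℝ) : Prop :=
  (∃! x, x ∈ Set.Icc p q ∧ e x = g x) ∧ ∀ x ∈ Set.Icc p q, e x ≤ g x

lemma zero_between_s11 (D : ℝ → ℝ) (s t : ℝ) (hD : ContinuousOn D (Set.uIcc s t))
    (hs : D s < 0) (ht : 0 < D t) :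
    ∃ z, D z = 0 ∧ ((s < z ∧ z < t) ∨ (t < z ∧ z < s)) := by
  have h0 : (0:ℝ) ∈ Set.uIcc (D s) (D t) := Set.mem_uIcc.mpr (Or.inl ⟨hs.le, ht.le⟩)
  obtain ⟨z, hz, hz0⟩ := intermediate_value_uIcc hD h0
  refine ⟨z, hz0, ?_⟩
  have hzs : z ≠ s := by rintro rfl; exact hs.ne hz0
  have hzt : z ≠ t := by rintro rfl; exact ht.ne' hz0
  rcases Set.mem_uIcc.mp hz with ⟨h1, h2⟩ | ⟨h1, h2⟩
  · exact Or.inl ⟨lt_of_le_of_ne h1 (Ne.symm hzs), lt_of_le_of_ne h2 hzt⟩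
  · exact Or.inr ⟨lt_of_le_of_ne h1 (Ne.symm hzt), lt_of_le_of_ne h2 hzs⟩

lemma cross_lemma_s11 {g h : ℝ → ℝ} (hgc : Continuous g) (hhc : Continuous h)
    (hsub : {x | g x = h x}.Subsingleton) {s₁ t₁ s₂ t₂ : ℝ}
    (h1 : g s₁ < h s₁) (h2 : h t₁ < g t₁) (h3 : g s₂ < h s₂) (h4 : h t₂ < g t₂) :
    ∃ w, (s₁ < w ∧ w < t₁ ∧ s₂ < w ∧ w < t₂) ∨ (t₁ < w ∧ w < s₁ ∧ t₂ < w ∧ w < s₂) := by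
  have hDc : Continuous (fun x => g x - h x) := hgc.sub hhc
  have mem : ∀ z : ℝ, g z - h z = 0 → z ∈ {x | g x = h x} := fun z hz => sub_eq_zero.mp hz
  obtain ⟨w₁, hw₁0, hw₁⟩ := zero_between_s11 (fun x => g x - h x) s₁ t₁ hDc.continuousOn
    (show g s₁ - h s₁ < 0 by linarith) (show (0:ℝ) < g t₁ - h t₁ by linarith)
  obtain ⟨w₂, hw₂0, hw₂⟩ := zero_between_s11 (fun x => g x - h x) s₂ t₂ hDc.continuousOn
    (show g s₂ - h s₂ < 0 by linarith) (show (0:ℝ) < g t₂ - h t₂ by linarith)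
  have hww : w₂ = w₁ := hsub (mem _ hw₂0) (mem _ hw₁0)
  subst hww
  rcases hw₁ with ⟨a1, a2⟩ | ⟨a1, a2⟩ <;> rcases hw₂ with ⟨b1, b2⟩ | ⟨b1, b2⟩
  · exact ⟨w₂, Or.inl ⟨a1, a2, b1, b2⟩⟩
  · -- s₁ < w < t₁ and t₂ < w < s₂ : both s₁, t₂ < w, signs differ, extra zero
    exfalso
    obtain ⟨z, hz0, hz⟩ := zero_between_s11 (fun x => g x - h x) s₁ t₂ hDc.continuousOn
      (show g s₁ - h s₁ < 0 by linarith) (show (0:ℝ) < g t₂ - h t₂ by linarith)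
    have : z = w₂ := hsub (mem _ hz0) (mem _ hw₂0)
    subst this
    rcases hz with ⟨c1, c2⟩ | ⟨c1, c2⟩ <;> linarith
  · exfalso
    obtain ⟨z, hz0, hz⟩ := zero_between_s11 (fun x => g x - h x) s₂ t₁ hDc.continuousOn
      (show g s₂ - h s₂ < 0 by linarith) (show (0:ℝ) < g t₁ - h t₁ by linarith)
    have : z = w₂ := hsub (mem _ hz0) (mem _ hw₂0)
    subst this
    rcases hz with ⟨c1, c2⟩ | ⟨c1, c2⟩ <;> linarith
  · exact ⟨w₂, Or.inr ⟨a1, a2, b1, b2⟩⟩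

theorem key_lemma (e f : ℝ → ℝ) (p₁ q₁ p₂ q₂ : ℝ) (g : Fin 4 → ℝ → ℝ)
    (hgc : ∀ i, Continuous (g i))
    (hecont : ContinuousOn e (Set.Icc p₁ q₁)) (hfcont : ContinuousOn f (Set.Icc p₂ q₂))
    (hsub : ∀ i j : Fin 4, i ≠ j → {x | g i x = g j x}.Subsingleton)
    (hsubef : {x | x ∈ Set.Icc p₁ q₁ ∧ x ∈ Set.Icc p₂ q₂ ∧ e x = f x}.Subsingleton)
    (hte : ∀ i, TouchesFromBelow e p₁ q₁ (g i))
    (htf : ∀ i, TouchesFromBelow f p₂ q₂ (g i))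
    (hno3e : ∀ i j : Fin 4, i ≠ j → ∀ x ∈ Set.Icc p₁ q₁, e x = g i x → e x ≠ g j x)
    (hno3f : ∀ i j : Fin 4, i ≠ j → ∀ x ∈ Set.Icc p₂ q₂, f x = g i x → f x ≠ g j x)
    (hnoef : ∀ i : Fin 4, ∀ x, x ∈ Set.Icc p₁ q₁ → x ∈ Set.Icc p₂ q₂ →
      e x = g i x → f x ≠ g i x) : False := by
  choose X hXmem hXeq using fun i => (hte i).1.exists
  choose Y hYmem hYeq using fun i => (htf i).1.exists
  have hXlt : ∀ i j, i ≠ j → e (X i) < g j (X i) := fun i j hij =>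
    lt_of_le_of_ne ((hte j).2 (X i) (hXmem i)) (hno3e i j hij (X i) (hXmem i) (hXeq i))
  have hYlt : ∀ i j, i ≠ j → f (Y i) < g j (Y i) := fun i j hij =>
    lt_of_le_of_ne ((htf j).2 (Y i) (hYmem i)) (hno3f i j hij (Y i) (hYmem i) (hYeq i))
  have hXinj : Function.Injective X := by
    intro i j hij
    by_contra hne
    have h1 := hXlt i j hne
    have h2 : g j (X i) = e (X i) := by rw [hij]; exact (hXeq j).symm
    linarith
  set σ := Tuple.sort X with hσ
  have hmono : StrictMono (X ∘ σ) :=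
    (Tuple.monotone_sort X).strictMono_of_injective (hXinj.comp σ.injective)
  have hne01 : σ 0 ≠ σ 1 := fun h => by simpa using σ.injective h
  have hne12 : σ 1 ≠ σ 2 := fun h => by simpa using σ.injective h
  have hne23 : σ 2 ≠ σ 3 := fun h => by simpa using σ.injective h
  have hx01 : X (σ 0) < X (σ 1) := hmono (by decide)
  have hx12 : X (σ 1) < X (σ 2) := hmono (by decide)
  have hx23 : X (σ 2) < X (σ 3) := hmono (by decide)
  -- crossing of consecutive pair k, k+1
  have crossk : ∀ i j : Fin 4, i ≠ j → X i < X j →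
      ∃ w, X i < w ∧ w < X j ∧ Y i < w ∧ w < Y j := by
    intro i j hij hxlt
    have h1 : g i (X i) < g j (X i) := by
      have h := hXlt i j hij; rwa [hXeq i] at h
    have h2 : g j (X j) < g i (X j) := by
      have h := hXlt j i (Ne.symm hij); rwa [hXeq j] at h
    have h3 : g i (Y i) < g j (Y i) := by
      have h := hYlt i j hij; rwa [hYeq i] at h
    have h4 : g j (Y j) < g i (Y j) := by
      have h := hYlt j i (Ne.symm hij); rwa [hYeq j] at h
    obtain ⟨w, hw⟩ := cross_lemma_s11 (hgc i) (hgc j) (hsub i j hij) h1 h2 h3 h4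
    rcases hw with ⟨c1, c2, c3, c4⟩ | ⟨c1, c2, c3, c4⟩
    · exact ⟨w, c1, c2, c3, c4⟩
    · exfalso; linarith
  obtain ⟨w01, hw01a, hw01b, hw01c, hw01d⟩ := crossk (σ 0) (σ 1) hne01 hx01
  obtain ⟨w12, hw12a, hw12b, hw12c, hw12d⟩ := crossk (σ 1) (σ 2) hne12 hx12
  obtain ⟨w23, hw23a, hw23b, hw23c, hw23d⟩ := crossk (σ 2) (σ 3) hne23 hx23
  obtain ⟨hx0l, hx0r⟩ := hXmem (σ 0)
  obtain ⟨hx1l, hx1r⟩ := hXmem (σ 1)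
  obtain ⟨hx2l, hx2r⟩ := hXmem (σ 2)
  obtain ⟨hx3l, hx3r⟩ := hXmem (σ 3)
  obtain ⟨hy0l, hy0r⟩ := hYmem (σ 0)
  obtain ⟨hy1l, hy1r⟩ := hYmem (σ 1)
  obtain ⟨hy2l, hy2r⟩ := hYmem (σ 2)
  obtain ⟨hy3l, hy3r⟩ := hYmem (σ 3)
  -- memberships in the other domain
  have hx1m2 : X (σ 1) ∈ Set.Icc p₂ q₂ := ⟨by linarith, by linarith⟩
  have hy1m1 : Y (σ 1) ∈ Set.Icc p₁ q₁ := ⟨by linarith, by linarith⟩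
  have hx2m2 : X (σ 2) ∈ Set.Icc p₂ q₂ := ⟨by linarith, by linarith⟩
  have hy2m1 : Y (σ 2) ∈ Set.Icc p₁ q₁ := ⟨by linarith, by linarith⟩
  -- strict inequalities between e and f
  have hstrict : ∀ i : Fin 4, X i ∈ Set.Icc p₂ q₂ → f (X i) < e (X i) := by
    intro i hm
    have hle : f (X i) ≤ g i (X i) := (htf i).2 (X i) hm
    have hne : f (X i) ≠ g i (X i) := hnoef i (X i) (hXmem i) hm (hXeq i)
    rw [hXeq i]; exact lt_of_le_of_ne hle hne
  have hstrict' : ∀ i : Fin 4, Y i ∈ Set.Icc p₁ q₁ → e (Y i) < f (Y i) := by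
    intro i hm
    have hle : e (Y i) ≤ g i (Y i) := (hte i).2 (Y i) hm
    have hne : e (Y i) ≠ g i (Y i) := by
      intro hcontra
      exact hnoef i (Y i) hm (hYmem i) hcontra (hYeq i)
    rw [hYeq i]; exact lt_of_le_of_ne hle hne
  have hfx1 : f (X (σ 1)) < e (X (σ 1)) := hstrict _ hx1m2
  have hey1 : e (Y (σ 1)) < f (Y (σ 1)) := hstrict' _ hy1m1
  have hfx2 : f (X (σ 2)) < e (X (σ 2)) := hstrict _ hx2m2
  have hey2 : e (Y (σ 2)) < f (Y (σ 2)) := hstrict' _ hy2m1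
  -- common points of e and f
  have hDz : ∀ u v : ℝ, u ∈ Set.Icc p₁ q₁ → v ∈ Set.Icc p₁ q₁ →
      u ∈ Set.Icc p₂ q₂ → v ∈ Set.Icc p₂ q₂ → e u < f u → f v < e v →
      ∃ z, e z = f z ∧ ((u < z ∧ z < v) ∨ (v < z ∧ z < u)) := by
    intro u v hu1 hv1 hu2 hv2 h1 h2
    have hsubs1 : Set.uIcc u v ⊆ Set.Icc p₁ q₁ := by
      intro z hz
      rcases Set.mem_uIcc.mp hz with ⟨ha, hb⟩ | ⟨ha, hb⟩ <;>
        exact ⟨by rcases hu1 with ⟨c,_⟩; rcases hv1 with ⟨c',_⟩; linarith,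
               by rcases hu1 with ⟨_,c⟩; rcases hv1 with ⟨_,c'⟩; linarith⟩
    have hsubs2 : Set.uIcc u v ⊆ Set.Icc p₂ q₂ := by
      intro z hz
      rcases Set.mem_uIcc.mp hz with ⟨ha, hb⟩ | ⟨ha, hb⟩ <;>
        exact ⟨by rcases hu2 with ⟨c,_⟩; rcases hv2 with ⟨c',_⟩; linarith,
               by rcases hu2 with ⟨_,c⟩; rcases hv2 with ⟨_,c'⟩; linarith⟩
    have hcont : ContinuousOn (fun x => e x - f x) (Set.uIcc u v) :=
      (hecont.mono hsubs1).sub (hfcont.mono hsubs2)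
    obtain ⟨z, hz0, hz⟩ := zero_between_s11 (fun x => e x - f x) u v hcont
      (show e u - f u < 0 by linarith) (show (0:ℝ) < e v - f v by linarith)
    exact ⟨z, sub_eq_zero.mp hz0, hz⟩
  obtain ⟨z₁, hz₁e, hz₁⟩ := hDz (Y (σ 1)) (X (σ 1)) hy1m1 (hXmem (σ 1)) (hYmem (σ 1)) hx1m2 hey1 hfx1
  obtain ⟨z₂, hz₂e, hz₂⟩ := hDz (Y (σ 2)) (X (σ 2)) hy2m1 (hXmem (σ 2)) (hYmem (σ 2)) hx2m2 hey2 hfx2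
  have hz₁b : w01 < z₁ ∧ z₁ < w12 := by rcases hz₁ with ⟨c1, c2⟩ | ⟨c1, c2⟩ <;> constructor <;> linarith
  have hz₂b : w12 < z₂ ∧ z₂ < w23 := by rcases hz₂ with ⟨c1, c2⟩ | ⟨c1, c2⟩ <;> constructor <;> linarith
  have hm₁ : z₁ ∈ {x | x ∈ Set.Icc p₁ q₁ ∧ x ∈ Set.Icc p₂ q₂ ∧ e x = f x} :=
    ⟨⟨by rcases hz₁b with ⟨c,_⟩; linarith, by rcases hz₁b with ⟨_,c⟩; linarith⟩,
     ⟨by rcases hz₁b with ⟨c,_⟩; linarith, by rcases hz₁b with ⟨_,c⟩; linarith⟩, hz₁e⟩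
  have hm₂ : z₂ ∈ {x | x ∈ Set.Icc p₁ q₁ ∧ x ∈ Set.Icc p₂ q₂ ∧ e x = f x} :=
    ⟨⟨by rcases hz₂b with ⟨c,_⟩; linarith, by rcases hz₂b with ⟨_,c⟩; linarith⟩,
     ⟨by rcases hz₂b with ⟨c,_⟩; linarith, by rcases hz₂b with ⟨_,c⟩; linarith⟩, hz₂e⟩
  have : z₁ = z₂ := hsubef hm₁ hm₂
  rcases hz₁b with ⟨_, c1⟩; rcases hz₂b with ⟨c2, _⟩
  linarith

theorem stmt11 (a b c d e f : ℝ → ℝ) (p₁ q₁ p₂ q₂ : ℝ)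
    (hp₁ : p₁ ≤ q₁) (hp₂ : p₂ ≤ q₂)
    (ha : Continuous a) (hb : Continuous b) (hc : Continuous c) (hd : Continuous d)
    (he : ContinuousOn e (Set.Icc p₁ q₁)) (hf : ContinuousOn f (Set.Icc p₂ q₂))
    -- the six curves are pairwise distinct
    (hdist : Function.Injective (curveGraphs a b c d e f p₁ q₁ p₂ q₂))
    -- the family of six curves is 1-intersecting
    (h1int : ∀ i j : Fin 6, i ≠ j →
      {x : ℝ | ∃ y : ℝ, (x, y) ∈ curveGraphs a b c d e f p₁ q₁ p₂ q₂ i ∧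
        (x, y) ∈ curveGraphs a b c d e f p₁ q₁ p₂ q₂ j}.Subsingleton)
    -- no three of the six curves share a common point
    (hno3 : ∀ (i j k : Fin 6), i ≠ j → j ≠ k → i ≠ k → ∀ z : ℝ × ℝ,
      ¬ (z ∈ curveGraphs a b c d e f p₁ q₁ p₂ q₂ i ∧
         z ∈ curveGraphs a b c d e f p₁ q₁ p₂ q₂ j ∧
         z ∈ curveGraphs a b c d e f p₁ q₁ p₂ q₂ k))
    -- each of `e` and `f` touches each of `a, b, c, d` from below
    (hea : TouchesFromBelow e p₁ q₁ a) (heb : TouchesFromBelow e p₁ q₁ b)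
    (hec : TouchesFromBelow e p₁ q₁ c) (hed : TouchesFromBelow e p₁ q₁ d)
    (hfa : TouchesFromBelow f p₂ q₂ a) (hfb : TouchesFromBelow f p₂ q₂ b)
    (hfc : TouchesFromBelow f p₂ q₂ c) (hfd : TouchesFromBelow f p₂ q₂ d) :
    False := by
  have h46 : (4:ℕ) ≤ 6 := by norm_num
  set G : Fin 4 → ℝ → ℝ := ![a, b, c, d] with hG
  have hgr : ∀ i : Fin 4, curveGraphs a b c d e f p₁ q₁ p₂ q₂ (Fin.castLE h46 i) =
      {z : ℝ × ℝ | z.2 = G i z.1} := by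
    intro i; fin_cases i <;> rfl
  have hgr4 : curveGraphs a b c d e f p₁ q₁ p₂ q₂ 4 =
      {z : ℝ × ℝ | z.1 ∈ Set.Icc p₁ q₁ ∧ z.2 = e z.1} := rfl
  have hgr5 : curveGraphs a b c d e f p₁ q₁ p₂ q₂ 5 =
      {z : ℝ × ℝ | z.1 ∈ Set.Icc p₂ q₂ ∧ z.2 = f z.1} := rfl
  have hne4 : ∀ i : Fin 4, Fin.castLE h46 i ≠ 4 := by
    intro i h
    have h' : (Fin.castLE h46 i).val = (4 : Fin 6).val := congrArg Fin.val h
    have hi := i.isLt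
    simp [Fin.coe_castLE] at h'
    omega
  have hne5 : ∀ i : Fin 4, Fin.castLE h46 i ≠ 5 := by
    intro i h
    have h' : (Fin.castLE h46 i).val = (5 : Fin 6).val := congrArg Fin.val h
    have hi := i.isLt
    simp [Fin.coe_castLE] at h'
    omega
  have hneij : ∀ i j : Fin 4, i ≠ j → Fin.castLE h46 i ≠ Fin.castLE h46 j :=
    fun i j hij h => hij (Fin.castLE_injective h46 h)
  apply key_lemma e f p₁ q₁ p₂ q₂ G
  · intro i; fin_cases i <;> assumption
  · exact he
  · exact hf
  · intro i j hij x hx x' hx'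
    apply h1int (Fin.castLE h46 i) (Fin.castLE h46 j) (hneij i j hij)
    · exact ⟨G i x, by rw [hgr i]; exact rfl, by rw [hgr j]; exact hx⟩
    · exact ⟨G i x', by rw [hgr i]; exact rfl, by rw [hgr j]; exact hx'⟩
  · intro x hx x' hx'
    apply h1int 4 5 (by decide)
    · exact ⟨e x, by rw [hgr4]; exact ⟨hx.1, rfl⟩, by rw [hgr5]; exact ⟨hx.2.1, hx.2.2⟩⟩
    · exact ⟨e x', by rw [hgr4]; exact ⟨hx'.1, rfl⟩, by rw [hgr5]; exact ⟨hx'.2.1, hx'.2.2⟩⟩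
  · intro i; fin_cases i <;> assumption
  · intro i; fin_cases i <;> assumption
  · intro i j hij x hx h1 h2
    exact hno3 (Fin.castLE h46 i) (Fin.castLE h46 j) 4 (hneij i j hij) (hne4 j) (hne4 i)
      (x, e x) ⟨by rw [hgr i]; exact h1, by rw [hgr j]; exact h2, by rw [hgr4]; exact ⟨hx, rfl⟩⟩
  · intro i j hij x hx h1 h2
    exact hno3 (Fin.castLE h46 i) (Fin.castLE h46 j) 5 (hneij i j hij) (hne5 j) (hne5 i)
      (x, f x) ⟨by rw [hgr i]; exact h1, by rw [hgr j]; exact h2, by rw [hgr5]; exact ⟨hx, rfl⟩⟩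
  · intro i x hx1 hx2 hei hfi
    exact hno3 (Fin.castLE h46 i) 4 5 (hne4 i) (by decide) (hne5 i) (x, e x)
      ⟨by rw [hgr i]; exact hei, by rw [hgr4]; exact ⟨hx1, rfl⟩,
       by rw [hgr5]; exact ⟨hx2, hei.trans hfi.symm⟩⟩
end

section
/- For every integer k ≥ 1 there exists a constant C > 0 such that for every integer n ≥ 1 the following holds: for every family of n pairwise distinct continuous functions f_1, …, f_n : ℝ → ℝ such that every two of them have at most k common points (the set {x : f_i(x) = f_j(x)} has at most k elements for all i ≠ j) and no three of them share a common point, the number of tangent pairs is at most C · n^{2 − 1/(k+1)}. -/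
open Finset

lemma exists_zero_mem_uIoo {g : ℝ → ℝ} (hg : Continuous g) {x y : ℝ} (h : g x * g y < 0) :
    ∃ z ∈ Set.uIoo x y, g z = 0 := by
  have h0 : (0 : ℝ) ∈ Set.uIcc (g x) (g y) := by
    rcases mul_neg_iff.1 h with ⟨hx, hy⟩ | ⟨hx, hy⟩
    · exact Set.mem_uIcc.2 (Or.inr ⟨hy.le, hx.le⟩)
    · exact Set.mem_uIcc.2 (Or.inl ⟨hx.le, hy.le⟩)
  obtain ⟨z, hz, hz0⟩ := intermediate_value_uIcc hg.continuousOn h0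
  have hzx : z ≠ x := by rintro rfl; simp [hz0] at h
  have hzy : z ≠ y := by rintro rfl; simp [hz0] at h
  refine ⟨z, ?_, hz0⟩
  rcases le_total x y with hxy | hxy
  · rw [Set.uIcc_of_le hxy] at hz
    exact Set.mem_uIoo_of_lt (hz.1.lt_of_ne' hzx) (hz.2.lt_of_ne hzy)
  · rw [Set.uIcc_of_ge hxy] at hz
    exact Set.mem_uIoo_of_gt (hz.1.lt_of_ne' hzy) (hz.2.lt_of_ne hzx)

lemma exists_two_zeros_of_alternating {g : ℝ → ℝ} (hg : Continuous g) {x y w : ℝ}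
    (hxy : x < y) (hyw : y < w) (h₁ : g x * g y < 0) (h₂ : g y * g w < 0) :
    ∃ z₁ ∈ Set.Icc x w, ∃ z₂ ∈ Set.Icc x w, z₁ ≠ z₂ ∧ g z₁ = 0 ∧ g z₂ = 0 := by
  obtain ⟨z₁, hz₁, hz₁0⟩ := exists_zero_mem_uIoo hg h₁
  obtain ⟨z₂, hz₂, hz₂0⟩ := exists_zero_mem_uIoo hg h₂
  rw [Set.uIoo_of_lt hxy] at hz₁
  rw [Set.uIoo_of_lt hyw] at hz₂
  exact ⟨z₁, ⟨hz₁.1.le, by linarith [hz₁.2]⟩, z₂, ⟨by linarith [hz₂.1], hz₂.2.le⟩,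
    (hz₁.2.trans hz₂.1).ne, hz₁0, hz₂0⟩

/-- The order hypothesis rules out `x₁ < y₂ < y₁ < x₂` and its mirror image, where `g` need
change sign only once. -/
lemma exists_two_zeros_of_crossed_signs {g : ℝ → ℝ} (hg : Continuous g) {S : Set ℝ}
    (hS : S.OrdConnected) {x₁ y₁ x₂ y₂ : ℝ} (hx₁ : x₁ ∈ S) (hy₁ : y₁ ∈ S) (hx₂ : x₂ ∈ S)
    (hy₂ : y₂ ∈ S) (gx₁ : g x₁ < 0) (gy₁ : 0 < g y₁) (gx₂ : 0 < g x₂) (gy₂ : g y₂ < 0)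
    (hord : x₁ < x₂ ↔ y₁ < y₂) :
    ∃ z₁ ∈ S, ∃ z₂ ∈ S, z₁ ≠ z₂ ∧ g z₁ = 0 ∧ g z₂ = 0 := by
  have key : ∀ {x y w}, x ∈ S → w ∈ S → x < y → y < w → g x * g y < 0 → g y * g w < 0 →
      ∃ z₁ ∈ S, ∃ z₂ ∈ S, z₁ ≠ z₂ ∧ g z₁ = 0 ∧ g z₂ = 0 := by
    intro x y w hx hw hxy hyw h₁ h₂
    obtain ⟨z₁, hz₁, z₂, hz₂, hne, hz₁0, hz₂0⟩ := exists_two_zeros_of_alternating hg hxy hyw h₁ h₂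
    exact ⟨z₁, hS.out hx hw hz₁, z₂, hS.out hx hw hz₂, hne, hz₁0, hz₂0⟩
  have hne : ∀ {u v}, g u < 0 → 0 < g v → u ≠ v := fun hu hv huv => by
    rw [huv] at hu; linarith
  rcases (hne gx₁ gx₂).lt_or_gt with h₁₂ | h₂₁
  · have h' := hord.1 h₁₂
    rcases (hne gx₁ gy₁).lt_or_gt with h | h
    · exact key hx₁ hy₂ h h' (mul_neg_of_neg_of_pos gx₁ gy₁) (mul_neg_of_pos_of_neg gy₁ gy₂)
    · exact key hy₁ hx₂ h h₁₂ (mul_neg_of_pos_of_neg gy₁ gx₁) (mul_neg_of_neg_of_pos gx₁ gx₂)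
  · have h' : y₂ < y₁ := (hne gy₂ gy₁).symm.lt_of_le' (not_lt.1 (hord.not.1 h₂₁.not_gt))
    rcases (hne gy₂ gx₂).lt_or_gt with h | h
    · exact key hy₂ hx₁ h h₂₁ (mul_neg_of_neg_of_pos gy₂ gx₂) (mul_neg_of_pos_of_neg gx₂ gx₁)
    · exact key hx₂ hy₁ h h' (mul_neg_of_pos_of_neg gx₂ gy₂) (mul_neg_of_neg_of_pos gy₂ gy₁)

/-- The level sets of `cellIndex Z` are the half-open cells `(zᵢ, zᵢ₊₁]` between consecutive
points of `Z`. -/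
noncomputable def cellIndex (Z : Finset ℝ) (x : ℝ) : ℕ := #{z ∈ Z | z < x}

lemma filter_lt_subset_filter_lt (Z : Finset ℝ) {x y : ℝ} (hxy : x ≤ y) :
    {z ∈ Z | z < x} ⊆ {z ∈ Z | z < y} :=
  fun _ hz => mem_filter.2 ⟨(mem_filter.1 hz).1, (mem_filter.1 hz).2.trans_le hxy⟩

lemma cellIndex_mono (Z : Finset ℝ) : Monotone (cellIndex Z) := fun _ _ hxy =>
  card_le_card (filter_lt_subset_filter_lt Z hxy)

lemma cellIndex_le_card (Z : Finset ℝ) (x : ℝ) : cellIndex Z x ≤ #Z := card_filter_le _ _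

lemma ordConnected_cellIndex_preimage (Z : Finset ℝ) (ℓ : ℕ) :
    (cellIndex Z ⁻¹' {ℓ}).OrdConnected :=
  Set.ordConnected_singleton.preimage_mono (cellIndex_mono Z)

lemma notMem_of_cellIndex_eq {Z : Finset ℝ} {x y z : ℝ} (h : cellIndex Z x = cellIndex Z y)
    (hz : z ∈ Set.uIoo x y) : z ∉ Z := by
  wlog hxy : x ≤ y generalizing x y
  · exact this h.symm (Set.uIoo_comm x y ▸ hz) (le_of_not_ge hxy)
  rw [Set.uIoo_of_le hxy] at hz
  intro hzZ
  refine h.not_lt (card_lt_card ⟨filter_lt_subset_filter_lt Z hxy, ?_⟩)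
  intro hsub
  have := (mem_filter.1 (hsub (mem_filter.2 ⟨hzZ, hz.2⟩))).2
  exact this.not_gt hz.1

section Curves

lemma Tangent.ne {f g : ℝ → ℝ} (h : Tangent f g) : f ≠ g := by
  rintro rfl
  obtain ⟨x, -, hx⟩ := h.1
  linarith [hx (x + 1) rfl]

variable {ι κ : Type*}

def IsKIntersecting (f : ι → ℝ → ℝ) (k : ℕ) : Prop :=
  ∀ i j, i ≠ j → {x | f i x = f j x}.Finite ∧ {x | f i x = f j x}.ncard ≤ k

def NoThreeConcurrent (f : ι → ℝ → ℝ) : Prop :=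
  ¬ ∃ (x : ℝ) (i j l : ι), i ≠ j ∧ j ≠ l ∧ i ≠ l ∧ f i x = f j x ∧ f j x = f l x

lemma NoThreeConcurrent.apply_ne {f : ι → ℝ → ℝ} (h : NoThreeConcurrent f) {i j l : ι} {x : ℝ}
    (hij : i ≠ j) (hjl : j ≠ l) (hil : i ≠ l) (hx : f i x = f j x) : f j x ≠ f l x :=
  fun hx' => h ⟨x, i, j, l, hij, hjl, hil, hx, hx'⟩

lemma exists_finset_crossings [Fintype κ] {f : ι → ℝ → ℝ} {k : ℕ} (hk : IsKIntersecting f k)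
    {e : κ → ι} (he : e.Injective) :
    ∃ Z : Finset ℝ, #Z ≤ Fintype.card κ ^ 2 * k ∧
      ∀ m m' x, m ≠ m' → f (e m) x = f (e m') x → x ∈ Z := by
  classical
  let pairs : Finset (κ × κ) := {p | p.1 ≠ p.2}
  let S := ⋃ p ∈ pairs, {x | f (e p.1) x = f (e p.2) x}
  have hS : S.Finite :=
    pairs.finite_toSet.biUnion fun p hp => (hk _ _ (he.ne (mem_filter.1 hp).2)).1
  refine ⟨hS.toFinset, ?_, fun m m' x hmm' hx => hS.mem_toFinset.2 ?_⟩
  · calc #hS.toFinset = S.ncard := (Set.ncard_eq_toFinset_card S hS).symm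
      _ ≤ ∑ p ∈ pairs, {x | f (e p.1) x = f (e p.2) x}.ncard := pairs.set_ncard_biUnion_le _
      _ ≤ #pairs * k := sum_le_card_nsmul _ _ _ fun p hp => (hk _ _ (he.ne (mem_filter.1 hp).2)).2
      _ ≤ Fintype.card κ ^ 2 * k := by
        gcongr
        exact (card_filter_le _ _).trans (by simp [sq])
  · exact Set.mem_biUnion (x := (m, m')) (mem_filter.2 ⟨mem_univ _, hmm'⟩) hx

end Curves

section Touching

variable {ι κ : Type*} {f : ι → ℝ → ℝ} {e : κ → ι} {Z : Finset ℝ} {b b' : ι} {t t' : κ → ℝ}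

lemma eq_of_sameSide_of_cellIndex_eq (hcont : ∀ i, Continuous (f i)) (hno3 : NoThreeConcurrent f)
    (he : e.Injective) (hZ : ∀ m m' x, m ≠ m' → f (e m) x = f (e m') x → x ∈ Z)
    (htan : ∀ m, Tangent (f (e m)) (f b)) (ht : ∀ m, f (e m) (t m) = f b (t m)) {m m' : κ}
    (hside : f (e m) ≤ f b ↔ f (e m') ≤ f b) (hcell : cellIndex Z (t m) = cellIndex Z (t m')) :
    m = m' := by
  by_contra hmm'
  have hb : ∀ m, b ≠ e m := fun m hm => (htan m).ne (congrArg f hm.symm)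
  have h₁ : f (e m) (t m) ≠ f (e m') (t m) :=
    hno3.apply_ne (hb m) (he.ne hmm') (hb m') (ht m).symm
  have h₂ : f (e m') (t m') ≠ f (e m) (t m') :=
    hno3.apply_ne (hb m') (he.ne hmm').symm (hb m) (ht m').symm
  have hsign : (f (e m) - f (e m')) (t m) * (f (e m) - f (e m')) (t m') < 0 := by
    simp only [Pi.sub_apply]
    by_cases hm : f (e m) ≤ f b
    · have hm' := hside.1 hm
      refine mul_neg_of_pos_of_neg (sub_pos.2 ?_) (sub_neg.2 ?_)
      · exact ((ht m).symm ▸ hm' (t m)).lt_of_ne h₁.symm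
      · exact ((ht m').symm ▸ hm (t m')).lt_of_ne h₂.symm
    · have hm₁ : f b ≤ f (e m) := (htan m).2.resolve_left hm
      have hm₂ : f b ≤ f (e m') := (htan m').2.resolve_left (mt hside.2 hm)
      refine mul_neg_of_neg_of_pos (sub_neg.2 ?_) (sub_pos.2 ?_)
      · exact ((ht m).symm ▸ hm₂ (t m)).lt_of_ne' h₁.symm
      · exact ((ht m').symm ▸ hm₁ (t m')).lt_of_ne' h₂.symm
  obtain ⟨z, hz, hz0⟩ := exists_zero_mem_uIoo ((hcont _).sub (hcont _)) hsign
  exact notMem_of_cellIndex_eq hcell hz (hZ m m' z hmm' (sub_eq_zero.1 hz0))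

structure SameTouchType (f : ι → ℝ → ℝ) (e : κ → ι) (Z : Finset ℝ) (b b' : ι)
    (t t' : κ → ℝ) : Prop where
  tangent : ∀ m, Tangent (f (e m)) (f b)
  tangent' : ∀ m, Tangent (f (e m)) (f b')
  touch : ∀ m, f (e m) (t m) = f b (t m)
  touch' : ∀ m, f (e m) (t' m) = f b' (t' m)
  side : ∀ m, f (e m) ≤ f b ↔ f (e m) ≤ f b'
  cell : ∀ m, cellIndex Z (t m) = cellIndex Z (t' m)
  order : ∀ m m', t m ≤ t m' ↔ t' m ≤ t' m'

namespace SameTouchType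

lemma ne_left (h : SameTouchType f e Z b b' t t') (m : κ) : e m ≠ b := fun hm =>
  (h.tangent m).ne (congrArg f hm)

lemma ne_right (h : SameTouchType f e Z b b' t t') (m : κ) : e m ≠ b' := fun hm =>
  (h.tangent' m).ne (congrArg f hm)

lemma signs_of_le (h : SameTouchType f e Z b b' t t') (hno3 : NoThreeConcurrent f)
    (hbb' : b ≠ b') {m : κ} (hm : f (e m) ≤ f b) :
    (f b - f b') (t m) < 0 ∧ 0 < (f b - f b') (t' m) := by
  have h₁ := hno3.apply_ne (h.ne_left m) hbb' (h.ne_right m) (h.touch m)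
  have h₂ := hno3.apply_ne (h.ne_right m) hbb'.symm (h.ne_left m) (h.touch' m)
  simp only [Pi.sub_apply, sub_neg, sub_pos]
  exact ⟨(h.touch m ▸ (h.side m).1 hm (t m)).lt_of_ne h₁,
    (h.touch' m ▸ hm (t' m)).lt_of_ne h₂⟩

lemma signs_of_not_le (h : SameTouchType f e Z b b' t t') (hno3 : NoThreeConcurrent f)
    (hbb' : b ≠ b') {m : κ} (hm : ¬ f (e m) ≤ f b) :
    0 < (f b - f b') (t m) ∧ (f b - f b') (t' m) < 0 := by
  have h₁ := hno3.apply_ne (h.ne_left m) hbb' (h.ne_right m) (h.touch m)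
  have h₂ := hno3.apply_ne (h.ne_right m) hbb'.symm (h.ne_left m) (h.touch' m)
  have hb : f b ≤ f (e m) := (h.tangent m).2.resolve_left hm
  have hb' : f b' ≤ f (e m) := (h.tangent' m).2.resolve_left (mt (h.side m).2 hm)
  simp only [Pi.sub_apply, sub_neg, sub_pos]
  exact ⟨(h.touch m ▸ hb' (t m)).lt_of_ne' h₁, (h.touch' m ▸ hb (t' m)).lt_of_ne' h₂⟩

lemma exists_zero_mem_cell (h : SameTouchType f e Z b b' t t') (hcont : ∀ i, Continuous (f i))
    (hno3 : NoThreeConcurrent f) (hbb' : b ≠ b') (m : κ) :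
    ∃ z ∈ cellIndex Z ⁻¹' {cellIndex Z (t m)}, (f b - f b') z = 0 := by
  have hsign : (f b - f b') (t m) * (f b - f b') (t' m) < 0 := by
    by_cases hm : f (e m) ≤ f b
    · exact mul_neg_of_neg_of_pos (h.signs_of_le hno3 hbb' hm).1 (h.signs_of_le hno3 hbb' hm).2
    · exact mul_neg_of_pos_of_neg (h.signs_of_not_le hno3 hbb' hm).1
        (h.signs_of_not_le hno3 hbb' hm).2
  obtain ⟨z, hz, hz0⟩ := exists_zero_mem_uIoo ((hcont b).sub (hcont b')) hsign
  exact ⟨z, (ordConnected_cellIndex_preimage Z _).uIcc_subset rfl (h.cell m).symm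
    (Set.uIoo_subset_uIcc_self hz), hz0⟩

lemma exists_two_zeros_mem_cell (h : SameTouchType f e Z b b' t t')
    (hcont : ∀ i, Continuous (f i)) (hno3 : NoThreeConcurrent f) (he : e.Injective)
    (hZ : ∀ m m' x, m ≠ m' → f (e m) x = f (e m') x → x ∈ Z) (hbb' : b ≠ b') {m m' : κ}
    (hmm' : m ≠ m') (hcell : cellIndex Z (t m) = cellIndex Z (t m')) :
    ∃ z₁ ∈ cellIndex Z ⁻¹' {cellIndex Z (t m)}, ∃ z₂ ∈ cellIndex Z ⁻¹' {cellIndex Z (t m)},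
      z₁ ≠ z₂ ∧ (f b - f b') z₁ = 0 ∧ (f b - f b') z₂ = 0 := by
  have hside : ¬ (f (e m) ≤ f b ↔ f (e m') ≤ f b) := fun hs =>
    hmm' (eq_of_sameSide_of_cellIndex_eq hcont hno3 he hZ h.tangent h.touch hs hcell)
  wlog hm : f (e m) ≤ f b generalizing m m'
  · have hm' : f (e m') ≤ f b := by_contra fun hm' => hside (iff_of_false hm hm')
    rw [hcell]
    exact this hmm'.symm hcell.symm (fun hs => hside hs.symm) hm'
  have hm' : ¬ f (e m') ≤ f b := fun hm' => hside (iff_of_true hm hm')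
  obtain ⟨gm, gm'⟩ := h.signs_of_le hno3 hbb' hm
  obtain ⟨gn, gn'⟩ := h.signs_of_not_le hno3 hbb' hm'
  have hord : t m < t m' ↔ t' m < t' m' := by simpa only [not_le] using (h.order m' m).not
  exact exists_two_zeros_of_crossed_signs ((hcont b).sub (hcont b'))
    (ordConnected_cellIndex_preimage Z _) rfl (h.cell m).symm hcell.symm
    ((h.cell m').symm.trans hcell.symm) gm gm' gn gn' hord

lemma card_cell_le [Fintype κ] (h : SameTouchType f e Z b b' t t')
    (hcont : ∀ i, Continuous (f i)) (hno3 : NoThreeConcurrent f) (he : e.Injective)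
    (hZ : ∀ m m' x, m ≠ m' → f (e m) x = f (e m') x → x ∈ Z) (hbb' : b ≠ b')
    (hfin : {x | f b x = f b' x}.Finite) (ℓ : ℕ) :
    #{m | cellIndex Z (t m) = ℓ} ≤ #{z ∈ hfin.toFinset | cellIndex Z z = ℓ} := by
  classical
  set F : Finset κ := {m | cellIndex Z (t m) = ℓ}
  have hmem : ∀ {z}, cellIndex Z z = ℓ → (f b - f b') z = 0 →
      z ∈ ({z ∈ hfin.toFinset | cellIndex Z z = ℓ} : Finset ℝ) := fun hz hz0 => by
    simpa [sub_eq_zero] using And.intro hz0 hz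
  have hF : #F ≤ 2 := by
    refine card_le_card_of_injOn (fun m => decide (f (e m) ≤ f b)) (t := (univ : Finset Bool))
      (fun _ _ => mem_univ _) fun m hm m' hm' hmm' => ?_
    simp only [F, coe_filter, mem_univ, true_and] at hm hm'
    exact eq_of_sameSide_of_cellIndex_eq hcont hno3 he hZ h.tangent h.touch
      (by simpa using hmm') (hm.trans hm'.symm)
  obtain hF0 | ⟨m, hm⟩ := F.eq_empty_or_nonempty
  · simp [hF0]
  have hmℓ : cellIndex Z (t m) = ℓ := (mem_filter.1 hm).2
  obtain ⟨z, hz, hz0⟩ := h.exists_zero_mem_cell hcont hno3 hbb' m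
  have h1 := card_pos.2 ⟨z, hmem (hz.trans hmℓ) hz0⟩
  rcases (show #F ≤ 1 ∨ 1 < #F by omega) with hF1 | hF1
  · omega
  obtain ⟨m₁, hm₁, m₂, hm₂, hne⟩ := one_lt_card.1 hF1
  obtain ⟨z₁, hz₁, z₂, hz₂, hz₁₂, hz₁0, hz₂0⟩ := h.exists_two_zeros_mem_cell hcont hno3 he hZ
    hbb' hne ((mem_filter.1 hm₁).2.trans (mem_filter.1 hm₂).2.symm)
  have hm₁ℓ : cellIndex Z (t m₁) = ℓ := (mem_filter.1 hm₁).2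
  have h2 := one_lt_card.2 ⟨z₁, hmem (hz₁.trans hm₁ℓ) hz₁0, z₂, hmem (hz₂.trans hm₁ℓ) hz₂0, hz₁₂⟩
  omega

theorem card_le_ncard [Fintype κ] (h : SameTouchType f e Z b b' t t')
    (hcont : ∀ i, Continuous (f i)) (hno3 : NoThreeConcurrent f) (he : e.Injective)
    (hZ : ∀ m m' x, m ≠ m' → f (e m) x = f (e m') x → x ∈ Z) (hbb' : b ≠ b')
    (hfin : {x | f b x = f b' x}.Finite) :
    Fintype.card κ ≤ {x | f b x = f b' x}.ncard := by
  classical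
  calc Fintype.card κ
      = ∑ ℓ ∈ univ.image (cellIndex Z ∘ t), #{m | cellIndex Z (t m) = ℓ} :=
        card_eq_sum_card_image _ _
    _ ≤ ∑ ℓ ∈ univ.image (cellIndex Z ∘ t), #{z ∈ hfin.toFinset | cellIndex Z z = ℓ} :=
        sum_le_sum fun ℓ _ => h.card_cell_le hcont hno3 he hZ hbb' hfin ℓ
    _ ≤ #hfin.toFinset := (sum_card_fiberwise_eq_card_filter _ _ _).trans_le (card_filter_le _ _)
    _ = {x | f b x = f b' x}.ncard := (Set.ncard_eq_toFinset_card _ hfin).symm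

end SameTouchType

end Touching

/-- A curve tangent to all of `k + 1` fixed curves is classified by its side of each of them,
the cell of each touching point among the at most `(k + 1) ^ 2 * k` crossing points of the fixed
curves, and the relative order of the touching points. -/
abbrev TangentClass (k : ℕ) : Type :=
  (Fin (k + 1) → Bool) × (Fin (k + 1) → Fin ((k + 1) ^ 2 * k + 1)) ×
    (Fin (k + 1) → Fin (k + 1) → Bool)

theorem card_commonTangents_le {ι : Type*} {f : ι → ℝ → ℝ} {k : ℕ}
    (hcont : ∀ i, Continuous (f i)) (hk : IsKIntersecting f k) (hno3 : NoThreeConcurrent f)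
    {e : Fin (k + 1) → ι} (he : e.Injective) (B : Finset ι)
    (hB : ∀ b ∈ B, ∀ m, Tangent (f (e m)) (f b)) :
    #B ≤ Fintype.card (TangentClass k) := by
  classical
  obtain ⟨Z, hZcard, hZ⟩ := exists_finset_crossings hk he
  rw [Fintype.card_fin] at hZcard
  choose t ht using fun (b : B) m => (hB b b.2 m).1.exists
  let χ : B → TangentClass k := fun b =>
    (fun m => decide (f (e m) ≤ f b),
      fun m => ⟨cellIndex Z (t b m), Nat.lt_succ_of_le ((cellIndex_le_card Z _).trans hZcard)⟩,
      fun m m' => decide (t b m ≤ t b m'))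
  by_contra! hlt
  obtain ⟨b, b', hbb', hχ⟩ := Fintype.exists_ne_map_eq_of_card_lt χ (by simpa using hlt)
  simp only [χ, Prod.mk.injEq, funext_iff, decide_eq_decide, Fin.mk.injEq] at hχ
  obtain ⟨hside, hcell, horder⟩ := hχ
  have hsame : SameTouchType f e Z b b' (t b) (t b') :=
    ⟨fun m => hB b b.2 m, fun m => hB b' b'.2 m, ht b, ht b', hside, hcell, horder⟩
  have hbb' : (b : ι) ≠ b' := Subtype.coe_ne_coe.2 hbb'
  have hle := hsame.card_le_ncard hcont hno3 he hZ hbb' (hk b b' hbb').1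
  rw [Fintype.card_fin] at hle
  exact (hle.trans (hk b b' hbb').2).not_gt k.lt_succ_self

section KovariSosTuran

variable {α : Type*} [Fintype α]

lemma card_not_injective_le [DecidableEq α] (k : ℕ) :
    #{u : Fin (k + 1) → α | ¬ u.Injective} ≤ (k + 1) * k * Fintype.card α ^ k := by
  let insert : Fin (k + 1) × Fin k × (Fin k → α) → Fin (k + 1) → α :=
    fun p => Fin.insertNth p.1 (p.2.2 p.2.1) p.2.2
  calc #{u : Fin (k + 1) → α | ¬ u.Injective}
      ≤ #(univ.image insert) := card_le_card fun u hu => by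
        obtain ⟨i, j, hij, hne⟩ := Function.not_injective_iff.1 (mem_filter.1 hu).2
        obtain ⟨j', rfl⟩ := Fin.exists_succAbove_eq hne.symm
        refine mem_image.2 ⟨(i, j', Fin.removeNth i u), mem_univ _, ?_⟩
        simp [insert, Fin.removeNth, ← hij]
    _ ≤ (k + 1) * k * Fintype.card α ^ k := by
        refine card_image_le.trans ?_
        simp [mul_assoc]

variable (r : α → α → Prop) [DecidableRel r]

lemma sum_card_pow_eq_sum_card_common (k : ℕ) :
    ∑ b, #{a | r a b} ^ (k + 1) = ∑ u : Fin (k + 1) → α, #{b | ∀ m, r (u m) b} := by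
  calc ∑ b, #{a | r a b} ^ (k + 1)
      = ∑ b, #{u : Fin (k + 1) → α | ∀ m, r (u m) b} := by
        refine sum_congr rfl fun b _ => ?_
        rw [← Fintype.card_piFinset_const]
        congr 1
        ext u
        simp
    _ = ∑ u : Fin (k + 1) → α, #{b | ∀ m, r (u m) b} := by
        simp only [card_filter]
        exact sum_comm

theorem card_rel_pow_le [DecidableEq α] (k T : ℕ)
    (hT : ∀ u : Fin (k + 1) → α, u.Injective → #{b | ∀ m, r (u m) b} ≤ T) :
    #{p : α × α | r p.1 p.2} ^ (k + 1) ≤ (T + (k + 1) * k) * Fintype.card α ^ (2 * k + 1) := by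
  set n := Fintype.card α
  have hcommon : ∑ u : Fin (k + 1) → α, #{b | ∀ m, r (u m) b} ≤
      n ^ (k + 1) * T + (k + 1) * k * n ^ k * n := by
    rw [← sum_filter_add_sum_filter_not _ Function.Injective]
    gcongr
    · refine (sum_le_card_nsmul _ _ T fun u hu => hT u (mem_filter.1 hu).2).trans ?_
      simpa using Nat.mul_le_mul_right T ((card_filter_le _ _).trans (by simp [n]))
    · refine (sum_le_card_nsmul _ _ n fun u _ => (card_filter_le _ _).trans (by simp [n])).trans ?_
      simpa using Nat.mul_le_mul_right n (card_not_injective_le k)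
  have hedges : #{p : α × α | r p.1 p.2} = ∑ b, #{a | r a b} := by
    simp only [card_filter, Fintype.sum_prod_type]
    exact sum_comm
  calc #{p : α × α | r p.1 p.2} ^ (k + 1)
      = (∑ b, #{a | r a b}) ^ (k + 1) := by rw [hedges]
    _ ≤ n ^ k * ∑ b, #{a | r a b} ^ (k + 1) := by
        simpa using pow_sum_le_card_mul_sum_pow (s := univ) (fun b _ => Nat.zero_le _) k
    _ ≤ n ^ k * (n ^ (k + 1) * T + (k + 1) * k * n ^ k * n) := by
        rw [sum_card_pow_eq_sum_card_common]
        gcongr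
    _ = (T + (k + 1) * k) * n ^ (2 * k + 1) := by ring

end KovariSosTuran

lemma le_mul_rpow_of_pow_le {x y C : ℝ} {m p : ℕ} (hm : m ≠ 0) (hx : 0 ≤ x) (hy : 0 ≤ y)
    (hC : 1 ≤ C) (h : x ^ m ≤ C * y ^ p) : x ≤ C * y ^ ((p : ℝ) / m) := by
  have hroot : (y ^ ((p : ℝ) / m)) ^ m = y ^ p := by
    rw [← Real.rpow_natCast, ← Real.rpow_mul hy, div_mul_cancel₀ _ (Nat.cast_ne_zero.2 hm),
      Real.rpow_natCast]
  refine (pow_le_pow_iff_left₀ hx (by positivity) hm).1 ?_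
  calc x ^ m ≤ C * y ^ p := h
    _ ≤ C ^ m * y ^ p := by gcongr; exact le_self_pow₀ hC hm
    _ = (C * y ^ ((p : ℝ) / m)) ^ m := by rw [mul_pow, hroot]

theorem stmt17_general (k : ℕ) :
    ∃ C : ℝ, 0 < C ∧ ∀ n : ℕ, 1 ≤ n →
      ∀ f : Fin n → ℝ → ℝ,
        (∀ i, Continuous (f i)) →
        Function.Injective f →
        -- every two curves have at most `k` common points
        (∀ i j : Fin n, i ≠ j →
          {x : ℝ | f i x = f j x}.Finite ∧ {x : ℝ | f i x = f j x}.ncard ≤ k) →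
        -- no three curves share a common point
        (¬ ∃ (x : ℝ) (i j l : Fin n), i ≠ j ∧ j ≠ l ∧ i ≠ l ∧
          f i x = f j x ∧ f j x = f l x) →
        ({p : Fin n × Fin n | p.1 < p.2 ∧ Tangent (f p.1) (f p.2)}.ncard : ℝ) ≤
          C * (n : ℝ) ^ ((2 : ℝ) - 1 / (k + 1)) := by
  classical
  set T := Fintype.card (TangentClass k)
  refine ⟨T + (k + 1) * k + 1, by positivity, fun n _ f hcont _ hk hno3 => ?_⟩
  have hpow := card_rel_pow_le (fun i j => Tangent (f i) (f j)) k T fun u hu =>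
    card_commonTangents_le hcont hk hno3 hu _ fun _ hb => (mem_filter.1 hb).2
  have hcard : {p : Fin n × Fin n | p.1 < p.2 ∧ Tangent (f p.1) (f p.2)}.ncard ≤
      #{p : Fin n × Fin n | Tangent (f p.1) (f p.2)} := by
    rw [← Set.ncard_coe_finset]
    exact Set.ncard_le_ncard (fun p hp => by simpa using hp.2)
  have hexp : ((2 * k + 1 : ℕ) : ℝ) / (k + 1 : ℕ) = 2 - 1 / (k + 1) := by
    push_cast
    field_simp
    ring
  rw [← hexp]
  refine le_mul_rpow_of_pow_le k.succ_ne_zero (by positivity) (by positivity)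
    (by linarith [show (0 : ℝ) ≤ T + (k + 1) * k by positivity]) ?_
  calc ({p : Fin n × Fin n | p.1 < p.2 ∧ Tangent (f p.1) (f p.2)}.ncard : ℝ) ^ (k + 1)
      ≤ (#{p : Fin n × Fin n | Tangent (f p.1) (f p.2)} : ℝ) ^ (k + 1) := by gcongr
    _ ≤ (T + (k + 1) * k) * n ^ (2 * k + 1) := by exact_mod_cast hpow.trans (by simp)
    _ ≤ (T + (k + 1) * k + 1) * n ^ (2 * k + 1) :=
        mul_le_mul_of_nonneg_right (by linarith) (by positivity)

theorem stmt17 (k : ℕ) (hk : 1 ≤ k) :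
    ∃ C : ℝ, 0 < C ∧ ∀ n : ℕ, 1 ≤ n →
      ∀ f : Fin n → ℝ → ℝ,
        (∀ i, Continuous (f i)) →
        Function.Injective f →
        -- every two curves have at most `k` common points
        (∀ i j : Fin n, i ≠ j →
          {x : ℝ | f i x = f j x}.Finite ∧ {x : ℝ | f i x = f j x}.ncard ≤ k) →
        -- no three curves share a common point
        (¬ ∃ (x : ℝ) (i j l : Fin n), i ≠ j ∧ j ≠ l ∧ i ≠ l ∧
          f i x = f j x ∧ f j x = f l x) →
        ({p : Fin n × Fin n | p.1 < p.2 ∧ Tangent (f p.1) (f p.2)}.ncard : ℝ) ≤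
          C * (n : ℝ) ^ ((2 : ℝ) - 1 / (k + 1)) :=
  stmt17_general k
end
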